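/- arXiv:2409.17112 — 11 statements merged into one kernel-verified Lean document; each statement's English description precedes it below -/
import Mathlib

section
/- There exists a constant C > 0 such that for all α ∈ (0, 1/2), ex(α) ≤ e^{C·√(log(1/α))}·α. -/
open Filter MeasureTheory Pointwise

/-- `exZMod p λ α` is the minimum of `|A + λ·A|/p` over all `A ⊆ ℤ/pℤ` with `|A| ≥ αp`,
where `A + λ·A = {a + λa' : a, a' ∈ A}`. -/
noncomputable def exZMod (p : ℕ) (lam : ℤ) (α : ℝ) : ℝ :=
  sInf {x : ℝ | ∃ A : Finset (ZMod p), α * p ≤ (A.card : ℝ) ∧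
    x = (((A + A.image fun a => (lam : ZMod p) * a).card : ℝ)) / p}

/-- `exLam λ α` is the limsup of `exZMod p λ α` over primes `p → ∞`. -/
noncomputable def exLam (lam : ℤ) (α : ℝ) : ℝ :=
  Filter.limsup (fun p => exZMod p lam α) (Filter.atTop ⊓ Filter.principal {p : ℕ | p.Prime})

/-- `exD α` is the limsup of `exLam λ α` as `λ → ∞`. -/
noncomputable def exD (α : ℝ) : ℝ :=
  Filter.limsup (fun lam : ℤ => exLam lam α) Filter.atTop

/-!
Take `λ = n` large and read the position of `x ∈ ℤ/pℤ` as the integer `⌊x n^(k+1) / p⌋ < n^(k+1)`.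
Let `A` consist of the `x` whose position has all `k + 1` base-`n` digits below `m ≈ βn`, so
that `|A| ≈ β^(k+1) p`. At scale `n^k`, the position of `x + n x'` is, up to a carry, the sum of
the lower `k` digits of the position of `x'` and the upper `k` digits of that of `x`, reduced
mod `n^k`. There are at most `2 (2m)^k` such values, each hit by about `p / n^k` residues, so
`|A + n·A| ≲ 2 (2β)^k p`. With `s = √(log 1/α)`, taking `k + 1 ≈ s` digits of density
`β = e^(1-s)` gives `|A| ≥ αp` and `|A + n·A| ≤ e^(5s) α p`.
-/

open Finset

namespace SumsOfDilates

variable {n m k r p Q : ℕ}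

def boundedDigits (n m : ℕ) : ℕ → Finset ℕ
  | 0 => {0}
  | k + 1 => (range m ×ˢ boundedDigits n m k).image fun q => q.1 + n * q.2

lemma mem_boundedDigits_succ :
    r ∈ boundedDigits n m (k + 1) ↔ ∃ a < m, ∃ r₀ ∈ boundedDigits n m k, a + n * r₀ = r := by
  simp [boundedDigits, and_assoc]

lemma lt_pow_of_mem_boundedDigits (hmn : m ≤ n) (hr : r ∈ boundedDigits n m k) : r < n ^ k := by
  induction k generalizing r with
  | zero => simp_all [boundedDigits]
  | succ k ih =>
    obtain ⟨a, ha, r₀, hr₀, rfl⟩ := mem_boundedDigits_succ.1 hr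
    calc a + n * r₀ < n * (r₀ + 1) := by linarith
      _ ≤ n * n ^ k := Nat.mul_le_mul_left n (ih hr₀)
      _ = n ^ (k + 1) := (pow_succ' n k).symm

lemma div_mem_boundedDigits (hmn : m ≤ n) (hr : r ∈ boundedDigits n m (k + 1)) :
    r / n ∈ boundedDigits n m k := by
  obtain ⟨a, ha, r₀, hr₀, rfl⟩ := mem_boundedDigits_succ.1 hr
  rwa [Nat.add_mul_div_left _ _ (by omega), Nat.div_eq_of_lt (by omega), zero_add]

lemma mod_mem_boundedDigits (hmn : m ≤ n) (hr : r ∈ boundedDigits n m (k + 1)) :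
    r % n ^ k ∈ boundedDigits n m k := by
  induction k generalizing r with
  | zero => simp [boundedDigits, Nat.mod_one]
  | succ k ih =>
    obtain ⟨a, ha, r₀, hr₀, rfl⟩ := mem_boundedDigits_succ.1 hr
    have hn : 0 < n := by omega
    rw [pow_succ', Nat.mod_mul, Nat.add_mul_mod_self_left, Nat.mod_eq_of_lt (by omega),
      Nat.add_mul_div_left _ _ hn, Nat.div_eq_of_lt (by omega), zero_add]
    exact mem_boundedDigits_succ.2 ⟨a, ha, _, ih hr₀, rfl⟩

lemma card_boundedDigits (hmn : m ≤ n) (k : ℕ) : #(boundedDigits n m k) = m ^ k := by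
  induction k with
  | zero => rfl
  | succ k ih =>
    rw [boundedDigits, card_image_of_injOn, card_product, card_range, ih, pow_succ']
    rintro ⟨a, r⟩ h ⟨b, s⟩ h' he
    simp only [coe_product, coe_range, Set.mem_prod, Set.mem_Iio, mem_coe] at h h' he
    have hab : a = b := by
      simpa [Nat.add_mul_mod_self_left, Nat.mod_eq_of_lt, h.1.trans_le hmn, h'.1.trans_le hmn]
        using congrArg (· % n) he
    subst hab
    exact Prod.ext rfl (Nat.eq_of_mul_eq_mul_left (by omega) (Nat.add_left_cancel he))

lemma add_boundedDigits_subset : boundedDigits n m k + boundedDigits n m k ⊆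
    boundedDigits n (2 * m - 1) k := by
  induction k with
  | zero => simp [boundedDigits]
  | succ k ih =>
    intro t ht
    obtain ⟨r, hr, s, hs, rfl⟩ := mem_add.1 ht
    obtain ⟨a, ha, r₀, hr₀, rfl⟩ := mem_boundedDigits_succ.1 hr
    obtain ⟨b, hb, s₀, hs₀, rfl⟩ := mem_boundedDigits_succ.1 hs
    refine mem_boundedDigits_succ.2 ⟨a + b, by omega, r₀ + s₀, ih (add_mem_add hr₀ hs₀), by ring⟩

lemma card_add_boundedDigits_le (hmn : 2 * m ≤ n + 1) (k : ℕ) :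
    #(boundedDigits n m k + boundedDigits n m k) ≤ (2 * m - 1) ^ k :=
  (card_le_card add_boundedDigits_subset).trans_eq (card_boundedDigits (by omega) k)

def scaledPreimage (p Q : ℕ) (S : Finset ℕ) : Finset ℕ :=
  (range p).filter fun x => x * Q / p ∈ S

lemma scaledPreimage_subset_range (S : Finset ℕ) : scaledPreimage p Q S ⊆ range p :=
  filter_subset _ _

lemma card_filter_mul_div_eq_le (hQ : 0 < Q) (w : ℕ) :
    #{x ∈ range p | x * Q / p = w} ≤ p / Q + 2 := by
  refine (card_le_card (t := Ico (w * p / Q) (w * p / Q + (p / Q + 2))) fun x hx => ?_).trans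
    (by simp)
  obtain ⟨hxp, hw⟩ := mem_filter.1 hx
  have hp : 0 < p := by simp at hxp; omega
  have hlo : w * p ≤ x * Q := hw ▸ Nat.div_mul_le_self _ _
  have hhi : x * Q < (w + 1) * p := hw ▸ (Nat.div_lt_iff_lt_mul hp).1 (Nat.lt_succ_self _)
  refine mem_Ico.2 ⟨Nat.div_le_of_le_mul (by linarith), Nat.lt_of_mul_lt_mul_right (a := Q) ?_⟩
  calc x * Q < w * p + p := by linarith
    _ < (w * p / Q * Q + Q) + (p / Q * Q + Q) :=
      add_lt_add (Nat.lt_div_mul_add hQ) (Nat.lt_div_mul_add hQ)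
    _ = (w * p / Q + (p / Q + 2)) * Q := by ring

lemma card_scaledPreimage_le (hQ : 0 < Q) (S : Finset ℕ) :
    #(scaledPreimage p Q S) ≤ #S * (p / Q + 2) := by
  rw [mul_comm]
  refine card_le_mul_card_image_of_maps_to (fun x hx => (mem_filter.1 hx).2) _ fun w _ => ?_
  exact (card_le_card (filter_subset_filter _ (filter_subset _ _))).trans
    (card_filter_mul_div_eq_le hQ w)

lemma card_scaledPreimage_ge (hQ : 0 < Q) {S : Finset ℕ} (hS : S ⊆ range Q) :
    (#S : ℝ) * p / Q - 2 * Q ≤ #(scaledPreimage p Q S) := by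
  have hcompl : #{x ∈ range p | x * Q / p ∉ S} ≤ #(range Q \ S) * (p / Q + 2) := by
    refine (card_le_card fun x hx => ?_).trans (card_scaledPreimage_le hQ _)
    obtain ⟨hxp, hxS⟩ := mem_filter.1 hx
    refine mem_filter.2 ⟨hxp, mem_sdiff.2 ⟨mem_range.2 ?_, hxS⟩⟩
    exact Nat.div_lt_of_lt_mul (Nat.mul_lt_mul_of_pos_right (mem_range.1 hxp) hQ)
  have hsplit : (#(scaledPreimage p Q S) : ℝ) + #{x ∈ range p | x * Q / p ∉ S} = p := by
    exact_mod_cast (card_filter_add_card_filter_not _).trans (card_range p)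
  rw [card_sdiff_of_subset hS, card_range] at hcompl
  have hSQ : #S ≤ Q := by simpa using card_le_card hS
  have hcompl' : (#{x ∈ range p | x * Q / p ∉ S} : ℝ) ≤ (Q - #S) * (p / Q + 2) :=
    calc _ ≤ ((Q - #S : ℕ) : ℝ) * ((p / Q : ℕ) + 2) := by exact_mod_cast hcompl
      _ ≤ (Q - #S) * (p / Q + 2) := by
        rw [Nat.cast_sub hSQ]
        gcongr
        · exact sub_nonneg.2 (by exact_mod_cast hSQ)
        · exact Nat.cast_div_le
  have hQ' : (0 : ℝ) < Q := by exact_mod_cast hQ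
  have e : ((Q : ℝ) - #S) * (p / Q + 2) = p - #S * p / Q + 2 * Q - 2 * #S := by
    field_simp; ring
  have : (0 : ℝ) ≤ #S := by positivity
  linarith

lemma card_image_natCast_of_subset_range {P : Finset ℕ} (hP : P ⊆ range p) :
    #(P.image (Nat.cast : ℕ → ZMod p)) = #P :=
  card_image_of_injOn fun a ha b hb hab => by
    have := congrArg ZMod.val hab
    rwa [ZMod.val_cast_of_lt (mem_range.1 (hP ha)), ZMod.val_cast_of_lt (mem_range.1 (hP hb))]
      at this

lemma image_natCast_add_subset {P T : Finset ℕ} (c : ℕ)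
    (h : ∀ x ∈ P, ∀ x' ∈ P, (x + c * x') % p ∈ T) :
    P.image (Nat.cast : ℕ → ZMod p) + (P.image Nat.cast).image ((c : ZMod p) * ·) ⊆
      T.image Nat.cast := by
  intro t ht
  obtain ⟨_, ha, _, hb, rfl⟩ := mem_add.1 ht
  obtain ⟨x, hx, rfl⟩ := mem_image.1 ha
  obtain ⟨_, hb', rfl⟩ := mem_image.1 hb
  obtain ⟨x', hx', rfl⟩ := mem_image.1 hb'
  refine mem_image.2 ⟨_, h x hx x' hx', ?_⟩
  push_cast [ZMod.natCast_mod]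
  rfl

lemma mod_mul_div_eq_mul_div_mod (hp : 0 < p) (y : ℕ) : y % p * Q / p = y * Q / p % Q := by
  rcases Q.eq_zero_or_pos with rfl | hQ
  · simp
  have hlt : y % p * Q / p < Q :=
    Nat.div_lt_of_lt_mul (Nat.mul_lt_mul_of_pos_right (Nat.mod_lt y hp) hQ)
  conv_rhs => rw [← Nat.mod_add_div y p, add_mul, mul_assoc, Nat.add_mul_div_left _ _ hp,
    Nat.add_mul_mod_self_right, Nat.mod_eq_of_lt hlt]

lemma exists_add_mul_mul_div_eq (hn : 0 < n) (hp : 0 < p) (x x' : ℕ) :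
    ∃ j < 2, (x + n * x') * Q / p = x' * (n * Q) / p + x * (n * Q) / p / n + j := by
  refine ⟨if p ≤ x * Q % p + n * x' * Q % p then 1 else 0, by split_ifs <;> norm_num, ?_⟩
  have hx : x * (n * Q) / p / n = x * Q / p := by
    rw [Nat.div_div_eq_div_mul, mul_left_comm, mul_comm p, Nat.mul_div_mul_left _ _ hn]
  rw [hx, add_mul, Nat.add_div hp, show n * x' * Q = x' * (n * Q) by ring, add_comm (x * Q / p)]

lemma add_mul_mem_scaledPreimage {x x' : ℕ} (hmn : m ≤ n) (hp : 0 < p)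
    (hx : x ∈ scaledPreimage p (n ^ (k + 1)) (boundedDigits n m (k + 1)))
    (hx' : x' ∈ scaledPreimage p (n ^ (k + 1)) (boundedDigits n m (k + 1))) :
    (x + n * x') % p ∈ scaledPreimage p (n ^ k)
      ((boundedDigits n m k + boundedDigits n m k + range 2).image (· % n ^ k)) := by
  obtain ⟨-, hr⟩ := mem_filter.1 hx
  obtain ⟨-, hr'⟩ := mem_filter.1 hx'
  have hn : 0 < n := by
    obtain ⟨a, ha, -⟩ := mem_boundedDigits_succ.1 hr
    omega
  obtain ⟨j, hj, hsum⟩ := exists_add_mul_mul_div_eq (Q := n ^ k) hn hp x x'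
  rw [← pow_succ'] at hsum
  refine mem_filter.2 ⟨mem_range.2 (Nat.mod_lt _ hp), mem_image.2 ⟨_, add_mem_add
    (add_mem_add (mod_mem_boundedDigits hmn hr') (div_mem_boundedDigits hmn hr)) (mem_range.2 hj),
    ?_⟩⟩
  rw [mod_mul_div_eq_mul_div_mod hp, hsum]
  exact ((Nat.mod_modEq _ _).add_right _).add_right _

theorem exists_card_add_dilate_le (hn : 0 < n) (hmn : 2 * m ≤ n + 1) (hp : 0 < p) (k : ℕ) :
    ∃ A : Finset (ZMod p), ((m : ℝ) / n) ^ (k + 1) * p - 2 * n ^ (k + 1) ≤ #A ∧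
      (#(A + A.image ((n : ZMod p) * ·)) : ℝ) ≤ 2 * (2 * m / n) ^ k * (p + 2 * n ^ k) := by
  set P := scaledPreimage p (n ^ (k + 1)) (boundedDigits n m (k + 1))
  set W := (boundedDigits n m k + boundedDigits n m k + range 2).image (· % n ^ k)
  refine ⟨P.image Nat.cast, ?_, ?_⟩
  · rw [card_image_natCast_of_subset_range (scaledPreimage_subset_range _)]
    have h := card_scaledPreimage_ge (p := p) (S := boundedDigits n m (k + 1))
      (pow_pos hn (k + 1)) fun r hr => mem_range.2 (lt_pow_of_mem_boundedDigits (by omega) hr)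
    rw [card_boundedDigits (by omega)] at h
    push_cast at h
    calc _ = (m : ℝ) ^ (k + 1) * p / n ^ (k + 1) - 2 * n ^ (k + 1) := by rw [div_pow]; ring
      _ ≤ #P := h
  · have hW : #W ≤ 2 * (2 * m - 1) ^ k :=
      calc #W ≤ #(boundedDigits n m k + boundedDigits n m k) * #(range 2) :=
            card_image_le.trans card_add_le
        _ ≤ 2 * (2 * m - 1) ^ k := by
          rw [card_range, mul_comm]
          exact Nat.mul_le_mul_left 2 (card_add_boundedDigits_le hmn k)
    have hnat := (card_le_card (image_natCast_add_subset n fun x hx x' hx' =>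
        add_mul_mem_scaledPreimage (by omega) hp hx hx')).trans <|
      card_image_le.trans <| (card_scaledPreimage_le (pow_pos hn k) W).trans <|
        Nat.mul_le_mul_right _ hW
    have hn' : (0 : ℝ) < n := by exact_mod_cast hn
    calc _ ≤ 2 * ((2 * m - 1 : ℕ) : ℝ) ^ k * ((p / n ^ k : ℕ) + 2) := by exact_mod_cast hnat
      _ ≤ 2 * (2 * m) ^ k * (p / n ^ k + 2) := by
        gcongr
        · exact_mod_cast Nat.sub_le _ _
        · exact Nat.cast_div_le.trans_eq (by push_cast; rfl)
      _ = 2 * (2 * m / n) ^ k * (p + 2 * n ^ k) := by rw [div_pow]; field_simp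

theorem exists_dense_card_add_dilate_le {β : ℝ} (hβ : β ≤ 1 / 4) (hn : 4 ≤ n)
    (hnβ : 1 ≤ n * β) (k : ℕ) (hp : 4 * n ^ (k + 1) ≤ β ^ (k + 1) * p) :
    ∃ A : Finset (ZMod p), β ^ (k + 1) * p / 2 ≤ #A ∧
      (#(A + A.image ((n : ZMod p) * ·)) : ℝ) ≤ 4 ^ (k + 1) * β ^ k * p := by
  have hn' : (4 : ℝ) ≤ n := by exact_mod_cast hn
  have hβ0 : 0 < β := by nlinarith
  obtain ⟨m, hm_lo, hm_hi⟩ : ∃ m : ℕ, n * β ≤ m ∧ (m : ℝ) < n * β + 1 :=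
    ⟨_, Nat.le_ceil _, Nat.ceil_lt_add_one (by positivity)⟩
  have hmn : 2 * m ≤ n + 1 := by
    have : (2 * m : ℝ) ≤ n + 1 := by nlinarith
    exact_mod_cast this
  have hβp : β ^ (k + 1) * p ≤ p := by
    have : β ^ (k + 1) ≤ 1 := pow_le_one₀ hβ0.le (by linarith)
    nlinarith [(Nat.cast_nonneg p : (0 : ℝ) ≤ p)]
  have hpow : (n : ℝ) ^ k ≤ n ^ (k + 1) := pow_le_pow_right₀ (by linarith) (Nat.le_succ k)
  have hp0 : 0 < p := by
    have : (0 : ℝ) < p := by nlinarith [pow_pos (show (0 : ℝ) < n by linarith) (k + 1)]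
    exact_mod_cast this
  obtain ⟨A, hA, hAn⟩ := exists_card_add_dilate_le (by omega) hmn hp0 k
  refine ⟨A, ?_, hAn.trans ?_⟩
  · have : β ^ (k + 1) ≤ ((m : ℝ) / n) ^ (k + 1) :=
      pow_le_pow_left₀ hβ0.le ((le_div_iff₀ (by linarith)).2 (by linarith)) _
    nlinarith [(Nat.cast_nonneg p : (0 : ℝ) ≤ p)]
  · have h2m : (2 * m / n : ℝ) ≤ 4 * β := (div_le_iff₀ (by linarith)).2 (by linarith)
    calc 2 * (2 * m / n : ℝ) ^ k * (p + 2 * n ^ k) ≤ 2 * (4 * β) ^ k * (2 * p) := by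
          gcongr; linarith
      _ = 4 ^ (k + 1) * β ^ k * p := by ring

end SumsOfDilates

open SumsOfDilates

lemma exZMod_nonneg (p : ℕ) (lam : ℤ) (α : ℝ) : 0 ≤ exZMod p lam α :=
  Real.sInf_nonneg fun _ ⟨_, _, hx⟩ => hx ▸ by positivity

lemma exZMod_le_card_div {p : ℕ} {lam : ℤ} {α : ℝ} (A : Finset (ZMod p)) (hA : α * p ≤ #A) :
    exZMod p lam α ≤ #(A + A.image fun a => (lam : ZMod p) * a) / p :=
  csInf_le ⟨0, fun _ ⟨_, _, hy⟩ => hy ▸ by positivity⟩ ⟨A, hA, rfl⟩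

lemma exZMod_le_one (p : ℕ) (lam : ℤ) (α : ℝ) : exZMod p lam α ≤ 1 := by
  by_cases h : ∃ A : Finset (ZMod p), α * p ≤ #A
  · obtain ⟨A, hA⟩ := h
    refine (exZMod_le_card_div A hA).trans ?_
    rcases p.eq_zero_or_pos with rfl | hp
    · simp
    have : NeZero p := ⟨hp.ne'⟩
    refine div_le_one_of_le₀ ?_ (Nat.cast_nonneg p)
    exact_mod_cast (card_le_univ _).trans_eq (ZMod.card p)
  · unfold exZMod
    convert Real.sInf_empty.trans_le zero_le_one using 2
    exact Set.eq_empty_of_forall_notMem fun x ⟨A, hA, _⟩ => h ⟨A, hA⟩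

lemma exZMod_le_of_card_le {p : ℕ} (hp : 0 < p) {lam : ℤ} {α b : ℝ} (A : Finset (ZMod p))
    (hA : α * p ≤ #A) (hAlam : (#(A + A.image fun a => (lam : ZMod p) * a) : ℝ) ≤ b * p) :
    exZMod p lam α ≤ b :=
  (exZMod_le_card_div A hA).trans ((div_le_iff₀ (by exact_mod_cast hp)).2 hAlam)

instance : (atTop ⊓ 𝓟 {p : ℕ | p.Prime}).NeBot :=
  frequently_mem_iff_neBot.1 (Nat.frequently_atTop_iff_infinite.2 Nat.infinite_setOfPred_prime)

lemma exLam_le_of_eventually {lam : ℤ} {α b : ℝ} (h : ∀ᶠ p in atTop, exZMod p lam α ≤ b) :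
    exLam lam α ≤ b :=
  limsup_le_of_le (isCoboundedUnder_le_of_le _ fun p => exZMod_nonneg p lam α)
    (h.filter_mono inf_le_left)

lemma exLam_nonneg (lam : ℤ) (α : ℝ) : 0 ≤ exLam lam α :=
  le_limsup_of_frequently_le (Eventually.of_forall fun p => exZMod_nonneg p lam α).frequently
    (isBoundedUnder_of ⟨1, fun p => exZMod_le_one p lam α⟩)

lemma exD_le_of_eventually {α b : ℝ} (h : ∀ᶠ lam in atTop, exLam lam α ≤ b) : exD α ≤ b :=
  limsup_le_of_le (isCoboundedUnder_le_of_le _ fun lam => exLam_nonneg lam α) h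

lemma exD_le_one (α : ℝ) : exD α ≤ 1 :=
  exD_le_of_eventually <| Eventually.of_forall fun _ =>
    exLam_le_of_eventually <| Eventually.of_forall fun p => exZMod_le_one p _ α

theorem exD_le_four_pow_mul_pow {β : ℝ} (hβ0 : 0 < β) (hβ : β ≤ 1 / 4) (k : ℕ) {α : ℝ}
    (hα : α ≤ β ^ (k + 1) / 2) : exD α ≤ 4 ^ (k + 1) * β ^ k := by
  apply exD_le_of_eventually
  filter_upwards [eventually_ge_atTop (max 4 ⌈β⁻¹⌉₊ : ℤ)] with lam hlam
  lift lam to ℕ using by omega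
  have hn : 4 ≤ lam := by omega
  have hnβ : 1 ≤ lam * β := by
    have : β⁻¹ ≤ lam := (Nat.le_ceil _).trans (by exact_mod_cast (by omega : ⌈β⁻¹⌉₊ ≤ lam))
    rwa [inv_le_iff_one_le_mul₀ hβ0] at this
  apply exLam_le_of_eventually
  filter_upwards [eventually_ge_atTop ⌈4 * (lam : ℝ) ^ (k + 1) / β ^ (k + 1)⌉₊,
    eventually_gt_atTop 0] with p hp hp0
  have hp' : 4 * (lam : ℝ) ^ (k + 1) ≤ β ^ (k + 1) * p := by
    rw [← div_le_iff₀' (by positivity)]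
    exact (Nat.le_ceil _).trans (by exact_mod_cast hp)
  obtain ⟨A, hA, hAlam⟩ := exists_dense_card_add_dilate_le hβ hn hnβ k hp'
  refine exZMod_le_of_card_le hp0 A ?_ (by simpa using hAlam)
  nlinarith [(Nat.cast_nonneg p : (0 : ℝ) ≤ p)]

theorem exD_exp_neg_sq_le {s : ℝ} (hs : 5 < s) :
    exD (Real.exp (-s ^ 2)) ≤ Real.exp (5 * s - s ^ 2) := by
  set k := ⌊s - 1⌋₊
  have hk : (k : ℝ) ≤ s - 1 := Nat.floor_le (by linarith)
  have hk' : s - 2 < k := by linarith [Nat.lt_floor_add_one (s - 1)]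
  have he : (2 : ℝ) ≤ Real.exp 1 := by linarith [Real.add_one_le_exp 1]
  have hβ : Real.exp (1 - s) ≤ 1 / 4 := by
    rw [show 1 - s = -(s - 1) by ring, Real.exp_neg, one_div]
    exact inv_anti₀ (by norm_num) (by linarith [Real.add_one_le_exp (s - 1)])
  have hα : Real.exp (-s ^ 2) ≤ Real.exp (1 - s) ^ (k + 1) / 2 := by
    rw [← Real.exp_nat_mul, le_div_iff₀ (by norm_num)]
    calc Real.exp (-s ^ 2) * 2 ≤ Real.exp (-s ^ 2) * Real.exp 1 := by gcongr
      _ ≤ Real.exp ((k + 1 : ℕ) * (1 - s)) := by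
        rw [← Real.exp_add]; exact Real.exp_le_exp.2 (by push_cast; nlinarith)
  calc exD (Real.exp (-s ^ 2)) ≤ 4 ^ (k + 1) * Real.exp (1 - s) ^ k :=
        exD_le_four_pow_mul_pow (Real.exp_pos _) hβ k hα
    _ ≤ Real.exp 2 ^ (k + 1) * Real.exp (1 - s) ^ k := by
        gcongr
        rw [show (2 : ℝ) = 1 + 1 by norm_num, Real.exp_add]
        nlinarith
    _ = Real.exp (2 * (k + 1) + k * (1 - s)) := by
        rw [← Real.exp_nat_mul, ← Real.exp_nat_mul, ← Real.exp_add]; push_cast; ring_nf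
    _ ≤ Real.exp (5 * s - s ^ 2) := Real.exp_le_exp.2 (by nlinarith)

/-- There exists a constant `C > 0` such that for all `α ∈ (0, 1/2)`,
`ex(α) ≤ e^{C·√(log(1/α))}·α`. -/
theorem exD_upper_bound :
    ∃ C : ℝ, 0 < C ∧ ∀ α : ℝ, 0 < α → α < 1 / 2 →
      exD α ≤ Real.exp (C * Real.sqrt (Real.log (1 / α))) * α := by
  refine ⟨5, by norm_num, fun α hα0 hα2 => ?_⟩
  set s := Real.sqrt (Real.log (1 / α))
  have hα : α = Real.exp (-s ^ 2) := by
    rw [Real.sq_sqrt (Real.log_nonneg (by rw [le_div_iff₀ hα0]; linarith)), one_div,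
      Real.log_inv, neg_neg, Real.exp_log hα0]
  suffices exD α ≤ Real.exp (5 * s - s ^ 2) by rwa [sub_eq_add_neg, Real.exp_add, ← hα] at this
  have hs0 : 0 ≤ s := Real.sqrt_nonneg _
  rcases le_or_gt s 5 with hs | hs
  · exact (exD_le_one α).trans (Real.one_le_exp (by nlinarith))
  · rw [hα]
    exact exD_exp_neg_sq_le hs
end

section
/- For every integer n > 1 and every α ∈ (0,1), ex_T(n+1, α) ≤ ex_T(n, α); that is, ex_T(n, α) is non-increasing in n. -/
/-!
If `B ⊆ 𝕋^n` is open, the cylinder `B × 𝕋 ⊆ 𝕋^{n+1}` is open with the same measure, and forgetting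
the last coordinate maps its sumset `π₁(B × 𝕋) + π_{n+1}(B × 𝕋)` into `π₁(B) + π_n(B)`; so the
sumset of the cylinder lies in a cylinder of measure `μ(π₁(B) + π_n(B))`.
-/

open Filter MeasureTheory Pointwise

abbrev 𝕋 : Type := AddCircle (1 : ℝ)

/-- Projection `𝕋^{n+1} → 𝕋^n` forgetting the first coordinate. -/
def projFirst (n : ℕ) (x : Fin (n + 1) → 𝕋) (i : Fin n) : 𝕋 := x i.succ

/-- Projection `𝕋^{n+1} → 𝕋^n` forgetting the last coordinate. -/
def projLast (n : ℕ) (x : Fin (n + 1) → 𝕋) (i : Fin n) : 𝕋 := x i.castSucc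

/-- Auxiliary: `exTdim m α` is the infimum of `μ(π₁(B) + π_{m+1}(B))` over open sets
`B ⊆ 𝕋^{m+1}` with `μ(B) > α`. -/
noncomputable def exTdim (m : ℕ) (α : ℝ) : ℝ :=
  sInf {x : ℝ | ∃ B : Set (Fin (m + 1) → 𝕋), IsOpen B ∧ α < (volume B).toReal ∧
    x = (volume (projFirst m '' B + projLast m '' B)).toReal}

/-- `exT n α` is the paper's `ex_T(n, α)`, meaningful for `n ≥ 2`. -/
noncomputable def exT (n : ℕ) (α : ℝ) : ℝ := exTdim (n - 1) α

/-- `exT(α) = lim_{n→∞} ex_T(n, α)`; since `ex_T(n, α)` is non-increasing in `n` and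
bounded below, this limit equals the infimum. -/
noncomputable def exTlim (α : ℝ) : ℝ := ⨅ n : ℕ, exT (n + 2) α

instance : IsProbabilityMeasure (volume : Measure 𝕋) :=
  ⟨by simp [AddCircle.measure_univ]⟩

theorem measurePreserving_removeNth {n : ℕ} {α : Fin (n + 1) → Type*}
    [∀ i, MeasurableSpace (α i)] (μ : ∀ i, Measure (α i)) [∀ i, IsProbabilityMeasure (μ i)]
    (i : Fin (n + 1)) :
    MeasurePreserving (Fin.removeNth i) (Measure.pi μ) (Measure.pi fun j => μ (i.succAbove j)) :=
  measurePreserving_snd.comp (measurePreserving_piFinSuccAbove μ i)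

theorem measurePreserving_projLast (m : ℕ) :
    MeasurePreserving (projLast m) (volume : Measure (Fin (m + 1) → 𝕋)) volume := by
  have h : Fin.removeNth (Fin.last m) = projLast m := funext Fin.removeNth_last
  exact h ▸ measurePreserving_removeNth (fun _ => volume) (Fin.last m)

theorem continuous_projLast (m : ℕ) : Continuous (projLast m) :=
  continuous_pi fun _ => continuous_apply _

theorem image_add_image_preimage_projLast_subset (m : ℕ) (B : Set (Fin (m + 1) → 𝕋)) :
    projFirst (m + 1) '' (projLast (m + 1) ⁻¹' B) + projLast (m + 1) '' (projLast (m + 1) ⁻¹' B)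
      ⊆ projLast m ⁻¹' (projFirst m '' B + projLast m '' B) := by
  rintro _ ⟨_, ⟨x, hx, rfl⟩, _, ⟨y, hy, rfl⟩, rfl⟩
  -- `projLast m ∘ projFirst (m + 1) = projFirst m ∘ projLast (m + 1)` and `projLast m` is
  -- additive, both definitionally.
  exact Set.add_mem_add ⟨_, hx, rfl⟩ ⟨_, hy, rfl⟩

theorem exTdim_le {m : ℕ} {α : ℝ} {B : Set (Fin (m + 1) → 𝕋)} (hB : IsOpen B)
    (hα : α < (volume B).toReal) :
    exTdim m α ≤ (volume (projFirst m '' B + projLast m '' B)).toReal :=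
  csInf_le ⟨0, by rintro _ ⟨B, -, -, rfl⟩; exact ENNReal.toReal_nonneg⟩ ⟨B, hB, hα, rfl⟩

theorem le_exTdim {m : ℕ} {α c : ℝ} (hα : α < 1)
    (h : ∀ B : Set (Fin (m + 1) → 𝕋), IsOpen B → α < (volume B).toReal →
      c ≤ (volume (projFirst m '' B + projLast m '' B)).toReal) :
    c ≤ exTdim m α := by
  refine le_csInf ⟨_, Set.univ, isOpen_univ, by simpa using hα, rfl⟩ ?_
  rintro _ ⟨B, hB, hαB, rfl⟩
  exact h B hB hαB

theorem exTdim_succ_le (m : ℕ) {α : ℝ} (hα : α < 1) : exTdim (m + 1) α ≤ exTdim m α := by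
  refine le_exTdim hα fun B hB hαB => ?_
  have hcyl := measurePreserving_projLast (m + 1)
  calc exTdim (m + 1) α
      ≤ (volume (projFirst (m + 1) '' (projLast (m + 1) ⁻¹' B)
          + projLast (m + 1) '' (projLast (m + 1) ⁻¹' B))).toReal := by
        refine exTdim_le (hB.preimage (continuous_projLast _)) ?_
        rwa [hcyl.measure_preimage hB.measurableSet.nullMeasurableSet]
    _ ≤ (volume (projFirst m '' B + projLast m '' B)).toReal :=
        ENNReal.toReal_mono (measure_ne_top _ _) <|
          (measure_mono (image_add_image_preimage_projLast_subset m B)).trans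
            ((measurePreserving_projLast m).measure_preimage_le _)

/-- For every integer `n > 1` and every `α ∈ (0,1)`, `ex_T(n+1, α) ≤ ex_T(n, α)`;
that is, `ex_T(n, α)` is non-increasing in `n`. -/
theorem exT_antitone :
    ∀ n : ℕ, 1 < n → ∀ α : ℝ, 0 < α → α < 1 → exT (n + 1) α ≤ exT n α := by
  intro n hn α _ hα
  obtain ⟨m, rfl⟩ : ∃ m, n = m + 2 := ⟨n - 2, by omega⟩
  exact exTdim_succ_le (m + 1) hα
end

section
/- For every integer d ≥ 2 and every α ∈ (0, 2^{−d}), ex_T(d, α) ≤ 2^{d−1}·α^{1−1/d}; consequently ex_T(α) ≤ 2^{d−1}·α^{1−1/d}. -/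
open Filter MeasureTheory Pointwise

lemma mk_img_open {t : ℝ} : IsOpen ((QuotientAddGroup.mk : ℝ → 𝕋) '' Set.Ioo 0 t) :=
  QuotientAddGroup.isOpenMap_coe _ isOpen_Ioo

lemma volume_mk_Ioo {t : ℝ} (h0 : 0 ≤ t) (h1 : t ≤ 1) :
    volume ((QuotientAddGroup.mk : ℝ → 𝕋) '' Set.Ioo 0 t) = ENNReal.ofReal t := by
  have hmp := AddCircle.measurePreserving_mk 1 0
  have hSmeas : MeasurableSet ((QuotientAddGroup.mk : ℝ → 𝕋) '' Set.Ioo 0 t) :=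
    mk_img_open.measurableSet
  have hpre : (QuotientAddGroup.mk : ℝ → 𝕋) ⁻¹'
      ((QuotientAddGroup.mk : ℝ → 𝕋) '' Set.Ioo 0 t) ∩ Set.Ioc 0 (0 + 1) = Set.Ioo 0 t := by
    ext x
    simp only [Set.mem_inter_iff, Set.mem_preimage, Set.mem_image, Set.mem_Ioc, Set.mem_Ioo,
      zero_add]
    constructor
    · rintro ⟨⟨y, hy, hxy⟩, hx0, hx1⟩
      have hyIco : y ∈ Set.Ico (0:ℝ) (0 + 1) := ⟨hy.1.le, by simpa using lt_of_lt_of_le hy.2 h1⟩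
      rcases lt_or_eq_of_le hx1 with hx1' | hx1'
      · have hxIco : x ∈ Set.Ico (0:ℝ) (0 + 1) := ⟨hx0.le, by simpa using hx1'⟩
        have := (AddCircle.coe_eq_coe_iff_of_mem_Ico hyIco hxIco).mp hxy
        exact this ▸ hy
      · exfalso
        subst hx1'
        have h0Ico : (0:ℝ) ∈ Set.Ico (0:ℝ) (0 + 1) := ⟨le_refl _, by norm_num⟩
        have hy0 : ((y:ℝ) : 𝕋) = ((0:ℝ) : 𝕋) := by
          rw [hxy, QuotientAddGroup.mk_zero]
          exact AddCircle.coe_period (p := (1:ℝ))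
        have := (AddCircle.coe_eq_coe_iff_of_mem_Ico hyIco h0Ico).mp hy0
        exact hy.1.ne' this
    · intro hx
      exact ⟨⟨x, hx, rfl⟩, hx.1, by simpa using le_of_lt (lt_of_lt_of_le hx.2 h1)⟩
  calc volume ((QuotientAddGroup.mk : ℝ → 𝕋) '' Set.Ioo 0 t)
      = (volume.restrict (Set.Ioc 0 (0 + 1))) ((QuotientAddGroup.mk : ℝ → 𝕋) ⁻¹'
        ((QuotientAddGroup.mk : ℝ → 𝕋) '' Set.Ioo 0 t)) :=
        (hmp.measure_preimage hSmeas.nullMeasurableSet).symm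
    _ = volume ((QuotientAddGroup.mk : ℝ → 𝕋) ⁻¹'
        ((QuotientAddGroup.mk : ℝ → 𝕋) '' Set.Ioo 0 t) ∩ Set.Ioc 0 (0 + 1)) :=
        Measure.restrict_apply (hSmeas.preimage (AddCircle.measurable_mk' (a := (1:ℝ))))
    _ = ENNReal.ofReal t := by rw [hpre, Real.volume_Ioo, sub_zero]

lemma Ioo_add_Ioo_self {s : ℝ} (hs : 0 < s) :
    Set.Ioo (0:ℝ) s + Set.Ioo 0 s = Set.Ioo 0 (2 * s) := by
  ext x
  simp only [Set.mem_add, Set.mem_Ioo]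
  constructor
  · rintro ⟨a, ⟨ha0, has⟩, b, ⟨hb0, hbs⟩, rfl⟩
    constructor <;> linarith
  · rintro ⟨hx0, hx2⟩
    exact ⟨x / 2, ⟨by linarith, by linarith⟩, x / 2, ⟨by linarith, by linarith⟩, by ring⟩

lemma mk_image_add (A B : Set ℝ) :
    (QuotientAddGroup.mk : ℝ → 𝕋) '' A + (QuotientAddGroup.mk : ℝ → 𝕋) '' B =
      (QuotientAddGroup.mk : ℝ → 𝕋) '' (A + B) := by
  ext x
  simp only [Set.mem_add, Set.mem_image]
  constructor
  · rintro ⟨-, ⟨a, ha, rfl⟩, -, ⟨b, hb, rfl⟩, rfl⟩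
    exact ⟨a + b, ⟨a, ha, b, hb, rfl⟩, rfl⟩
  · rintro ⟨-, ⟨a, ha, b, hb, rfl⟩, rfl⟩
    exact ⟨_, ⟨a, ha, rfl⟩, _, ⟨b, hb, rfl⟩, rfl⟩

lemma pi_add_pi (n : ℕ) (S T : Set 𝕋) :
    (Set.pi Set.univ fun _ : Fin n => S) + (Set.pi Set.univ fun _ : Fin n => T) =
      Set.pi Set.univ fun _ : Fin n => S + T := by
  ext x
  constructor
  · rintro ⟨a, ha, b, hb, rfl⟩ i -
    exact ⟨a i, ha i trivial, b i, hb i trivial, rfl⟩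
  · intro h
    have h' : ∀ i : Fin n, ∃ a ∈ S, ∃ b ∈ T, a + b = x i := fun i => h i trivial
    choose a ha b hb hab using h'
    exact ⟨a, fun i _ => ha i, b, fun i _ => hb i, funext hab⟩

lemma projFirst_image_pi (n : ℕ) (S : Set 𝕋) (hS : S.Nonempty) :
    projFirst n '' Set.pi Set.univ (fun _ => S) = Set.pi Set.univ fun _ : Fin n => S := by
  obtain ⟨a, haS⟩ := hS
  ext y
  constructor
  · rintro ⟨x, hx, rfl⟩ i -
    exact hx i.succ trivial
  · intro hy
    refine ⟨Fin.cons a y, fun i _ => ?_, funext fun i => ?_⟩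
    · refine Fin.cases ?_ (fun j => ?_) i
      · simpa using haS
      · simpa using hy j trivial
    · simp [projFirst]

lemma projLast_image_pi (n : ℕ) (S : Set 𝕋) (hS : S.Nonempty) :
    projLast n '' Set.pi Set.univ (fun _ => S) = Set.pi Set.univ fun _ : Fin n => S := by
  obtain ⟨a, haS⟩ := hS
  ext y
  constructor
  · rintro ⟨x, hx, rfl⟩ i -
    exact hx i.castSucc trivial
  · intro hy
    refine ⟨Fin.snoc y a, fun i _ => ?_, funext fun i => ?_⟩
    · refine Fin.lastCases ?_ (fun j => ?_) i
      · simpa using haS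
      · simpa using hy j trivial
    · simp [projLast]

lemma exTdim_nonneg (m : ℕ) (α : ℝ) : 0 ≤ exTdim m α := by
  apply Real.sInf_nonneg
  rintro x ⟨B, -, -, rfl⟩
  exact ENNReal.toReal_nonneg

lemma exTdim_le_of_s (m : ℕ) (α s : ℝ) (hs0 : 0 < s) (hs2 : 2 * s ≤ 1)
    (hα : α < s ^ (m + 1)) : exTdim m α ≤ (2 * s) ^ m := by
  set I : Set 𝕋 := (QuotientAddGroup.mk : ℝ → 𝕋) '' Set.Ioo 0 s with hI
  have hs1 : s ≤ 1 := by linarith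
  have hIopen : IsOpen I := mk_img_open
  have hIvol : volume I = ENNReal.ofReal s := volume_mk_Ioo hs0.le hs1
  have hIne : I.Nonempty := ⟨_, Set.mem_image_of_mem _ (Set.mem_Ioo.2 ⟨half_pos hs0, half_lt_self hs0⟩)⟩
  set B : Set (Fin (m + 1) → 𝕋) := Set.pi Set.univ (fun _ => I) with hB
  have hBopen : IsOpen B := isOpen_set_pi Set.finite_univ fun _ _ => hIopen
  have hBvol : (volume B).toReal = s ^ (m + 1) := by
    rw [hB, volume_pi_pi, hIvol, Finset.prod_const, Finset.card_univ, Fintype.card_fin,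
      ← ENNReal.ofReal_pow hs0.le, ENNReal.toReal_ofReal (by positivity)]
  have hsum : projFirst m '' B + projLast m '' B =
      Set.pi Set.univ fun _ : Fin m => (QuotientAddGroup.mk : ℝ → 𝕋) '' Set.Ioo 0 (2 * s) := by
    rw [hB, projFirst_image_pi m I hIne, projLast_image_pi m I hIne, pi_add_pi, hI,
      mk_image_add, Ioo_add_Ioo_self hs0]
  have hsumvol : (volume (projFirst m '' B + projLast m '' B)).toReal = (2 * s) ^ m := by
    rw [hsum, volume_pi_pi]
    rw [volume_mk_Ioo (by linarith) hs2, Finset.prod_const, Finset.card_univ, Fintype.card_fin,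
      ← ENNReal.ofReal_pow (by linarith), ENNReal.toReal_ofReal (by positivity)]
  have hmem : (2 * s) ^ m ∈ {x : ℝ | ∃ B : Set (Fin (m + 1) → 𝕋), IsOpen B ∧
      α < (volume B).toReal ∧
      x = (volume (projFirst m '' B + projLast m '' B)).toReal} :=
    ⟨B, hBopen, by rw [hBvol]; exact hα, hsumvol.symm⟩
  exact csInf_le ⟨0, fun x ⟨C, _, _, hx⟩ => hx ▸ ENNReal.toReal_nonneg⟩ hmem

/-- For every integer `d ≥ 2` and every `α ∈ (0, 2^{−d})`,
`ex_T(d, α) ≤ 2^{d−1}·α^{1−1/d}`; consequently `ex_T(α) ≤ 2^{d−1}·α^{1−1/d}`. -/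
theorem exT_upper_bound_d :
    ∀ d : ℕ, 2 ≤ d → ∀ α : ℝ, 0 < α → α < 1 / 2 ^ d →
      exT d α ≤ 2 ^ (d - 1) * α ^ (1 - 1 / (d : ℝ)) ∧
      exTlim α ≤ 2 ^ (d - 1) * α ^ (1 - 1 / (d : ℝ)) := by
  intro d hd α hα0 hαlt
  have hd0 : (d : ℝ) ≠ 0 := by positivity
  set c : ℝ := α ^ (1 / (d : ℝ)) with hc
  have hc0 : 0 < c := Real.rpow_pos_of_pos hα0 _
  have hcd : c ^ d = α := by
    rw [hc, ← Real.rpow_natCast (α ^ (1 / (d:ℝ))) d, ← Real.rpow_mul hα0.le,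
      one_div, inv_mul_cancel₀ hd0, Real.rpow_one]
  have hchalf : c < 1 / 2 := by
    by_contra h
    push_neg at h
    have : (1/2 : ℝ) ^ d ≤ c ^ d := pow_le_pow_left₀ (by norm_num) h d
    rw [hcd, div_pow, one_pow] at this
    exact absurd hαlt (not_lt.2 this)
  -- rewrite the RHS
  have hrhs : (2:ℝ) ^ (d - 1) * α ^ (1 - 1 / (d : ℝ)) = (2 * c) ^ (d - 1) := by
    have h1 : (1 : ℝ) - 1 / (d : ℝ) = (1 / (d : ℝ)) * ((d : ℝ) - 1) := by
      field_simp
    have h2 : α ^ ((1:ℝ) - 1 / (d : ℝ)) = c ^ (d - 1) := by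
      rw [h1, Real.rpow_mul hα0.le, ← hc]
      have : ((d : ℝ) - 1) = ((d - 1 : ℕ) : ℝ) := by
        have : (1:ℕ) ≤ d := le_trans (by norm_num) hd
        push_cast [this]
        ring
      rw [this, Real.rpow_natCast]
    rw [h2, mul_pow]
  have key : ∀ n : ℕ, n + 1 = d → exTdim n α ≤ 2 ^ (d - 1) * α ^ (1 - 1 / (d : ℝ)) := by
    intro n hn
    rw [hrhs]
    have hnd : n = d - 1 := by omega
    have hev : ∀ᶠ s in nhdsWithin c (Set.Ioi c), exTdim n α ≤ (2 * s) ^ n := by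
      filter_upwards [Ioo_mem_nhdsGT_of_mem (Set.mem_Ico.2 ⟨le_refl c, hchalf⟩)] with s hs
      refine exTdim_le_of_s n α s (lt_trans hc0 hs.1) (by linarith [hs.2]) ?_
      calc α = c ^ d := hcd.symm
        _ < s ^ d := by
            exact pow_lt_pow_left₀ hs.1 hc0.le (by omega)
        _ = s ^ (n + 1) := by rw [hn]
    have htend : Tendsto (fun s : ℝ => (2 * s) ^ n) (nhdsWithin c (Set.Ioi c))
        (nhds ((2 * c) ^ n)) := by
      exact ((continuous_const.mul continuous_id).pow n).continuousAt.continuousWithinAt.tendsto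
    rw [← hnd]
    exact ge_of_tendsto htend hev
  constructor
  · exact key (d - 1) (by omega)
  · have h1 : exTlim α ≤ exT ((d - 2) + 2) α := by
      apply ciInf_le
      refine ⟨0, ?_⟩
      rintro x ⟨n, rfl⟩
      exact exTdim_nonneg _ _
    have h2 : (d - 2) + 2 = d := by omega
    rw [h2] at h1
    exact le_trans h1 (key (d - 1) (by omega))
end

section
/- There exists a constant C > 0 such that for all α ∈ (0, 1/2), ex_T(α) ≤ e^{C·√(log(1/α))}·α. -/
open Filter MeasureTheory Pointwise

lemma exT_nonneg (n : ℕ) (α : ℝ) : 0 ≤ exT n α := by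
  apply Real.sInf_nonneg
  rintro x ⟨B, -, -, rfl⟩
  exact ENNReal.toReal_nonneg

lemma exTlim_le (α : ℝ) (n : ℕ) : exTlim α ≤ exT (n + 2) α :=
  ciInf_le ⟨0, by rintro x ⟨n, rfl⟩; exact exT_nonneg _ _⟩ n

lemma volume_ball_T (r : ℝ) (hr : 0 ≤ r) (hr1 : 2 * r ≤ 1) :
    volume (Metric.ball (0 : 𝕋) r) = ENNReal.ofReal (2 * r) := by
  rw [← measure_congr (AddCircle.closedBall_ae_eq_ball (T := 1)),
    AddCircle.volume_closedBall, min_eq_right hr1]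

/-- The key construction: a box of balls. -/
lemma exTdim_le_of_box (k : ℕ) {α β : ℝ} (hβ0 : 0 < β) (hβ1 : β ≤ 1)
    (hα : α < β ^ (k + 1)) : exTdim k α ≤ (2 * β) ^ k := by
  set A : Set 𝕋 := Metric.ball (0 : 𝕋) (β / 2) with hA
  set B : Set (Fin (k + 1) → 𝕋) := Set.univ.pi fun _ => A with hB
  have hvolA : volume A = ENNReal.ofReal β := by
    rw [hA, volume_ball_T (β / 2) (by linarith) (by linarith)]
    ring_nf
  have hvolB : (volume B).toReal = β ^ (k + 1) := by
    rw [hB, volume_pi_pi, Finset.prod_const, hvolA, Finset.card_univ, Fintype.card_fin,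
      ENNReal.toReal_pow, ENNReal.toReal_ofReal hβ0.le]
  have hBopen : IsOpen B := isOpen_set_pi Set.finite_univ fun i _ => Metric.isOpen_ball
  -- the sumset is contained in a box of closed balls of radius β
  have hsub : projFirst k '' B + projLast k '' B ⊆
      Set.univ.pi fun _ : Fin k => Metric.closedBall (0 : 𝕋) β := by
    rintro z ⟨f, ⟨x, hx, rfl⟩, g, ⟨y, hy, rfl⟩, rfl⟩
    intro i _
    have h1 : x i.succ ∈ A := hx i.succ (Set.mem_univ _)
    have h2 : y i.castSucc ∈ A := hy i.castSucc (Set.mem_univ _)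
    rw [hA, mem_ball_zero_iff] at h1 h2
    have : ‖x i.succ + y i.castSucc‖ ≤ β := by
      calc ‖x i.succ + y i.castSucc‖ ≤ ‖x i.succ‖ + ‖y i.castSucc‖ := norm_add_le _ _
        _ ≤ β := by linarith
    simpa [mem_closedBall_zero_iff, projFirst, projLast] using this
  have hvolsum : (volume (projFirst k '' B + projLast k '' B)).toReal ≤ (2 * β) ^ k := by
    refine ENNReal.toReal_le_of_le_ofReal (by positivity) ?_
    calc volume (projFirst k '' B + projLast k '' B)
        ≤ volume (Set.univ.pi fun _ : Fin k => Metric.closedBall (0 : 𝕋) β) :=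
          measure_mono hsub
      _ = (ENNReal.ofReal (min 1 (2 * β))) ^ k := by
          rw [volume_pi_pi]
          simp [AddCircle.volume_closedBall]
      _ ≤ (ENNReal.ofReal (2 * β)) ^ k := by
          gcongr
          exact min_le_right _ _
      _ = ENNReal.ofReal ((2 * β) ^ k) := (ENNReal.ofReal_pow (by positivity) _).symm
  refine le_trans (csInf_le ?_ ?_) hvolsum
  · exact ⟨0, by rintro x ⟨B', -, -, rfl⟩; exact ENNReal.toReal_nonneg⟩
  · exact ⟨B, hBopen, by rw [hvolB]; exact hα, rfl⟩

/-- There exists a constant `C > 0` such that for all `α ∈ (0, 1/2)`,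
`ex_T(α) ≤ e^{C·√(log(1/α))}·α`. -/
theorem exTlim_upper_bound :
    ∃ C : ℝ, 0 < C ∧ ∀ α : ℝ, 0 < α → α < 1 / 2 →
      exTlim α ≤ Real.exp (C * Real.sqrt (Real.log (1 / α))) * α := by
  refine ⟨10, by norm_num, fun α hα0 hα2 => ?_⟩
  set L := Real.log (1 / α) with hL
  have hα1 : α < 1 := by linarith
  have h2α1 : 2 * α < 1 := by linarith
  have hL2 : Real.log 2 < L := by
    rw [hL]
    apply Real.log_lt_log (by norm_num)
    rw [lt_div_iff₀ hα0]; linarith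
  have hLpos : 0 < L := lt_trans (Real.log_pos (by norm_num)) hL2
  set s := Real.sqrt L with hs
  have hspos : 0 < s := Real.sqrt_pos.mpr hLpos
  have hss : s * s = L := Real.mul_self_sqrt hLpos.le
  set k := ⌈s⌉₊ with hk
  have hk1 : 1 ≤ k := Nat.one_le_ceil_iff.mpr hspos
  have hks : s ≤ (k : ℝ) := Nat.le_ceil s
  have hks2 : (k : ℝ) < s + 1 := Nat.ceil_lt_add_one hspos.le
  set β := (2 * α) ^ (((k + 1 : ℕ) : ℝ))⁻¹ with hβ
  have h2α0 : (0 : ℝ) < 2 * α := by linarith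
  have hβ0 : 0 < β := Real.rpow_pos_of_pos h2α0 _
  have hβ1 : β ≤ 1 := Real.rpow_le_one h2α0.le h2α1.le (by positivity)
  have hβpow : β ^ (k + 1) = 2 * α :=
    Real.rpow_inv_natCast_pow h2α0.le (by omega)
  have hα' : α < β ^ (k + 1) := by rw [hβpow]; linarith
  have hN0 : (0 : ℝ) < ((k + 1 : ℕ) : ℝ) := by positivity
  -- lower bound for β
  have hβlb : Real.exp (-s) ≤ β := by
    have h1 : α ^ (((k + 1 : ℕ) : ℝ))⁻¹ ≤ β :=
      Real.rpow_le_rpow hα0.le (by linarith) (by positivity)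
    refine le_trans ?_ h1
    rw [Real.rpow_def_of_pos hα0, Real.exp_le_exp]
    have hlogα : Real.log α = -L := by
      rw [hL, one_div, Real.log_inv]; ring
    rw [hlogα]
    rw [neg_mul, neg_le_neg_iff]
    rw [← div_eq_mul_inv, div_le_iff₀ hN0]
    calc L = s * s := hss.symm
      _ ≤ s * ((k : ℝ) + 1) := by nlinarith
      _ = s * ((k + 1 : ℕ) : ℝ) := by push_cast; ring
  have hβinv : β⁻¹ ≤ Real.exp s := by
    have := (inv_anti₀ (Real.exp_pos _) hβlb)
    rwa [Real.exp_neg, inv_inv] at this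
  have hβk : β ^ k = 2 * α / β := by
    rw [eq_div_iff hβ0.ne', ← pow_succ, hβpow]
  -- main estimate
  have h1 : exTlim α ≤ exTdim k α := by
    have h := exTlim_le α (k - 1)
    rwa [exT, show k - 1 + 2 - 1 = k from by omega] at h
  have h2 : exTdim k α ≤ (2 * β) ^ k := exTdim_le_of_box k hβ0 hβ1 hα'
  have h3 : (2 * β) ^ k ≤ Real.exp (10 * s) * α := by
    have e2 : (2 : ℝ) ^ (k + 1) ≤ Real.exp ((s + 2) * Real.log 2) := by
      have he : (2 : ℝ) ^ (k + 1) = Real.exp (((k + 1 : ℕ) : ℝ) * Real.log 2) := by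
        rw [← Real.log_pow, Real.exp_log (by positivity)]
      rw [he, Real.exp_le_exp]
      have hlog2 : (0 : ℝ) < Real.log 2 := Real.log_pos (by norm_num)
      push_cast
      nlinarith
    calc (2 * β) ^ k = 2 ^ k * β ^ k := mul_pow 2 β k
      _ = 2 ^ (k + 1) * α * β⁻¹ := by
          rw [hβk, pow_succ]; field_simp
      _ ≤ Real.exp ((s + 2) * Real.log 2) * α * Real.exp s := by
          have hb : (0:ℝ) ≤ 2 ^ (k+1) * α := by positivity
          apply mul_le_mul _ hβinv (by positivity) (by positivity)
          exact mul_le_mul_of_nonneg_right e2 hα0.le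
      _ = Real.exp ((s + 2) * Real.log 2 + s) * α := by
          rw [Real.exp_add]; ring
      _ ≤ Real.exp (10 * s) * α := by
          apply mul_le_mul_of_nonneg_right _ hα0.le
          rw [Real.exp_le_exp]
          have hlog2a : Real.log 2 < 0.6931471808 := Real.log_two_lt_d9
          have hlog2b : (0.6931471803 : ℝ) < Real.log 2 := Real.log_two_gt_d9
          nlinarith [sq_nonneg (s - 1)]
  calc exTlim α ≤ (2 * β) ^ k := le_trans h1 h2
    _ ≤ Real.exp (10 * s) * α := h3
end

section
/- Let d ≥ 2 be an integer and 0 < s < 1/2 a real number. Let I ⊆ 𝕋 be the image under the quotient map ℝ → ℝ/ℤ of the open interval (0, s), and let B = I^d ⊆ 𝕋^d. Then μ(B) = s^d and μ(π₁(B) + π_d(B)) = (2s)^{d−1}. -/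
open Filter MeasureTheory Pointwise

/-! The projections of a cube `I^d` with nonempty side are the cube `I^{d-1}`, and a sum of cubes
is the cube over `I + I`. Here `I + I` is the image of `(0, 2s)`; since `2s < 1` the quotient map
`ℝ → 𝕋` is injective there, so it preserves its length `2s`. -/

open Set

namespace Set

theorem Ioo_add_Ioo {α : Type*} [AddCommGroup α] [LinearOrder α] [IsOrderedAddMonoid α]
    [DenselyOrdered α] {a b c d : α} (hab : a < b) (hcd : c < d) :
    Ioo a b + Ioo c d = Ioo (a + c) (b + d) := by
  refine (add_subset_add Ioo_subset_Ico_self Ioo_subset_Ioc_self).trans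
    (Ico_add_Ioc_subset a b c d) |>.antisymm fun x ⟨hac, hbd⟩ => ?_
  obtain ⟨y, hlo, hhi⟩ := exists_between (a₁ := max a (x - d)) (a₂ := min b (x - c)) <| by
    simp only [max_lt_iff, lt_min_iff]
    exact ⟨⟨hab, sub_lt_iff_lt_add.2 hbd⟩, lt_sub_iff_add_lt.2 hac, sub_lt_sub_left hcd x⟩
  rw [max_lt_iff] at hlo
  rw [lt_min_iff] at hhi
  refine ⟨y, ⟨hlo.1, hhi.1⟩, x - y, ⟨?_, ?_⟩, add_sub_cancel y x⟩
  · exact lt_sub_comm.1 hhi.2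
  · exact sub_lt_comm.1 hlo.2

theorem univ_pi_add_univ_pi {ι : Type*} {α : ι → Type*} [∀ i, Add (α i)] (s t : ∀ i, Set (α i)) :
    univ.pi s + univ.pi t = univ.pi (s + t) := by
  ext x
  refine ⟨?_, fun hx => ?_⟩
  · rintro ⟨a, ha, b, hb, rfl⟩ i -
    exact ⟨a i, ha i trivial, b i, hb i trivial, rfl⟩
  · choose a ha b hb hab using fun i => hx i trivial
    exact ⟨a, fun i _ => ha i, b, fun i _ => hb i, funext hab⟩

theorem image_comp_univ_pi_const {ι κ α : Type*} {f : κ → ι} (hf : f.Injective) {t : Set α}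
    (ht : t.Nonempty) : (· ∘ f) '' univ.pi (fun _ : ι => t) = univ.pi (fun _ : κ => t) := by
  refine Subset.antisymm (by rintro _ ⟨x, hx, rfl⟩ k -; exact hx (f k) trivial) fun y hy => ?_
  obtain ⟨a, ha⟩ := ht
  refine ⟨Function.extend f y fun _ => a, fun i _ => ?_, Function.extend_comp hf y _⟩
  by_cases hi : ∃ k, f k = i
  · obtain ⟨k, rfl⟩ := hi
    simpa only [hf.extend_apply] using hy k trivial
  · simpa only [Function.extend_apply' _ _ _ hi] using ha

end Set

namespace AddCircle

variable {T : ℝ} [Fact (0 < T)]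

theorem coe_image_eq_preimage_equivIoc {t : ℝ} {S : Set ℝ} (hS : S ⊆ Ioc t (t + T)) :
    ((↑) '' S : Set (AddCircle T)) = equivIoc T t ⁻¹' (Subtype.val ⁻¹' S) := by
  ext x
  refine ⟨?_, fun hx => ⟨_, hx, (equivIoc T t).symm_apply_apply x⟩⟩
  rintro ⟨y, hy, rfl⟩
  simpa only [mem_preimage, equivIoc_coe_eq (hS hy)] using hy

theorem volume_coe_image {t : ℝ} {S : Set ℝ} (hS : MeasurableSet S) (hSt : S ⊆ Ioc t (t + T)) :
    volume ((↑) '' S : Set (AddCircle T)) = volume S := by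
  have hmeas : MeasurableSet ((↑) '' S : Set (AddCircle T)) := by
    rw [coe_image_eq_preimage_equivIoc hSt]
    exact (measurableEquivIoc T t).measurable (measurable_subtype_coe hS)
  have hinj : InjOn ((↑) : ℝ → AddCircle T) (Ioc t (t + T)) :=
    fun x hx y hy => (coe_eq_coe_iff_of_mem_Ioc hx hy).1
  rw [add_projection_respects_measure T t hmeas, hinj.preimage_image_inter hSt]

theorem volume_coe_image_Ioo {a : ℝ} (ha : a ≤ T) :
    volume ((↑) '' Ioo 0 a : Set (AddCircle T)) = ENNReal.ofReal a := by
  rw [volume_coe_image measurableSet_Ioo (t := 0) fun x hx => ⟨hx.1, by linarith [hx.2]⟩,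
    Real.volume_Ioo, sub_zero]

theorem toReal_volume_univ_pi_coe_image_Ioo (k : ℕ) {a : ℝ} (ha₀ : 0 ≤ a) (ha : a ≤ T) :
    (volume (univ.pi fun _ : Fin k => ((↑) '' Ioo 0 a : Set (AddCircle T)))).toReal = a ^ k := by
  simp [volume_pi_pi, volume_coe_image_Ioo ha, ENNReal.toReal_ofReal ha₀]

end AddCircle

theorem measure_cube_and_proj_sum_general (n : ℕ) (s : ℝ) (hs : 0 < s) (hs' : s < 1 / 2)
    (I : Set 𝕋) (hI : I = ((↑) : ℝ → 𝕋) '' Set.Ioo 0 s)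
    (B : Set (Fin (n + 1) → 𝕋)) (hB : B = Set.univ.pi fun _ => I) :
    (volume B).toReal = s ^ (n + 1) ∧
    (volume (projFirst n '' B + projLast n '' B)).toReal = (2 * s) ^ n := by
  have hI_nonempty : I.Nonempty := hI ▸ (nonempty_Ioo.2 hs).image _
  have hII : I + I = ((↑) : ℝ → 𝕋) '' Ioo 0 (2 * s) := by
    have h := image_add (QuotientAddGroup.mk' (AddSubgroup.zmultiples (1 : ℝ)))
      (s := Ioo 0 s) (t := Ioo 0 s)
    rw [Ioo_add_Ioo hs hs, add_zero, ← two_mul] at h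
    exact hI ▸ h.symm
  have hprojFirst : projFirst n '' B = univ.pi fun _ => I :=
    hB ▸ image_comp_univ_pi_const (Fin.succ_injective n) hI_nonempty
  have hprojLast : projLast n '' B = univ.pi fun _ => I :=
    hB ▸ image_comp_univ_pi_const (Fin.castSucc_injective n) hI_nonempty
  refine ⟨?_, ?_⟩
  · rw [hB, hI, AddCircle.toReal_volume_univ_pi_coe_image_Ioo _ hs.le (by linarith)]
  · rw [hprojFirst, hprojLast, univ_pi_add_univ_pi]
    change (volume (univ.pi fun _ => I + I)).toReal = _
    rw [hII]
    exact AddCircle.toReal_volume_univ_pi_coe_image_Ioo _ (by positivity) (by linarith)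

/-- Let `d = n + 1 ≥ 2` be an integer and `0 < s < 1/2` a real number. Let `I ⊆ 𝕋` be the
image under the quotient map `ℝ → ℝ/ℤ` of the open interval `(0, s)`, and let `B = I^d ⊆ 𝕋^d`.
Then `μ(B) = s^d` and `μ(π₁(B) + π_d(B)) = (2s)^{d−1}`. -/
theorem measure_cube_and_proj_sum (n : ℕ) (hn : 1 ≤ n) (s : ℝ) (hs : 0 < s) (hs' : s < 1 / 2)
    (I : Set 𝕋) (hI : I = ((↑) : ℝ → 𝕋) '' Set.Ioo 0 s)
    (B : Set (Fin (n + 1) → 𝕋)) (hB : B = Set.univ.pi fun _ => I) :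
    (volume B).toReal = s ^ (n + 1) ∧
    (volume (projFirst n '' B + projLast n '' B)).toReal = (2 * s) ^ n :=
  measure_cube_and_proj_sum_general n s hs hs' I hI B hB
end

section
/- Let G be an abelian group, λ an integer such that the map x ↦ λx is injective on G, B a finite nonempty subset of G, and K > 0 a real number such that |B + λ·B| ≤ K|B|. Then for every positive integer l, |B + λ·B + λ²·B + ⋯ + λ^l·B| ≤ K^{7l−6}|B|. -/
/-!
Write `S l = B + λ·B + ⋯ + λ^l·B`, so that `S (l + 1) = B + λ·S l`. Ruzsa's triangle inequality
through `λ·B`, together with `|λ·X| = |X|`, gives `|S (l + 1)| ≤ K |B + S l|`. Since `S l = B + T`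
for some `T`, a second triangle inequality through `B` and the Plünnecke–Ruzsa bound
`|3B| ≤ K³|B|` (applied with the auxiliary set `λ·B`) give `|B + S l| ≤ K³|S l|`. Hence
`|S l| ≤ K^(4l-3) |B|`, which is at most `K^(7l-6) |B|` because `K ≥ 1`.
-/

open Pointwise Finset

namespace Finset

lemma card_smul_finset_of_injective {M α : Type*} [SMul M α] [DecidableEq α] {a : M}
    (ha : Function.Injective (a • · : α → α)) (s : Finset α) : #(a • s) = #s :=
  card_image_of_injective s ha

variable {R G : Type*} [Monoid R] [AddCommGroup G] [DistribMulAction R G] [DecidableEq G]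
  {r : R} {B : Finset G} {K : ℝ}

def dilateSum (r : R) (B : Finset G) (l : ℕ) : Finset G :=
  ∑ i ∈ range (l + 1), r ^ i • B

@[simp]
lemma dilateSum_zero (r : R) (B : Finset G) : dilateSum r B 0 = B := by
  simp [dilateSum]

lemma dilateSum_succ (r : R) (B : Finset G) (l : ℕ) :
    dilateSum r B (l + 1) = B + r • dilateSum r B l := by
  rw [dilateSum, sum_range_succ', pow_zero, one_smul, add_comm, dilateSum, smul_sum]
  simp only [pow_succ', mul_smul]

lemma exists_dilateSum_eq_add (r : R) (B : Finset G) (l : ℕ) : ∃ T, dilateSum r B l = B + T := by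
  cases l with
  | zero => exact ⟨0, by rw [dilateSum_zero, add_zero]⟩
  | succ l => exact ⟨_, dilateSum_succ r B l⟩

lemma card_add_smul_mul_card_le (hr : Function.Injective (r • · : G → G)) (A B X : Finset G) :
    #(A + r • X) * #B ≤ #(A + r • B) * #(B + X) := by
  have := ruzsa_triangle_inequality_add_add_add A (r • B) (r • X)
  rwa [← smul_add, card_smul_finset_of_injective hr, card_smul_finset_of_injective hr] at this

lemma one_le_of_card_add_smul_le (hB : B.Nonempty) (hK : #(B + r • B) ≤ K * #B) : 1 ≤ K := by
  have hBpos : (0 : ℝ) < #B := by exact_mod_cast hB.card_pos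
  have hle : #B ≤ #(B + r • B) := card_le_card_add_right hB.smul_finset
  have : 1 * (#B : ℝ) ≤ K * #B := by rw [one_mul]; exact (Nat.cast_le.2 hle).trans hK
  exact le_of_mul_le_mul_right this hBpos

lemma card_nsmul_le_of_card_add_smul_le (hr : Function.Injective (r • · : G → G))
    (hB : B.Nonempty) (hK : #(B + r • B) ≤ K * #B) (n : ℕ) : #(n • B) ≤ K ^ n * #B := by
  have hBpos : (0 : ℝ) < #B := by exact_mod_cast hB.card_pos
  have hPR : (#(n • B) : ℝ) ≤ (#(r • B + B) / #B : ℝ) ^ n * #B := by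
    have := NNRat.cast_le (K := ℝ).2
      (pluennecke_ruzsa_inequality_nsmul_add (hB.smul_finset (a := r)) B n)
    push_cast at this
    rwa [card_smul_finset_of_injective hr] at this
  have hratio : (#(r • B + B) / #B : ℝ) ≤ K := by
    rw [div_le_iff₀ hBpos, add_comm]
    exact hK
  exact hPR.trans (by gcongr)

lemma card_add_add_le (hr : Function.Injective (r • · : G → G)) (hB : B.Nonempty)
    (hK : #(B + r • B) ≤ K * #B) (T : Finset G) : #(B + (B + T)) ≤ K ^ 3 * #(B + T) := by
  have hBpos : (0 : ℝ) < #B := by exact_mod_cast hB.card_pos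
  have hRuzsa : (#(B + (B + T)) * #B : ℝ) ≤ #(3 • B) * #(B + T) := by
    have := ruzsa_triangle_inequality_add_add_add (B + B) B T
    rw [← add_assoc, show 3 • B = B + B + B by rw [succ_nsmul, two_nsmul]]
    exact_mod_cast this
  have h3B := card_nsmul_le_of_card_add_smul_le hr hB hK 3
  refine le_of_mul_le_mul_right ?_ hBpos
  calc (#(B + (B + T)) * #B : ℝ) ≤ #(3 • B) * #(B + T) := hRuzsa
    _ ≤ K ^ 3 * #B * #(B + T) := by gcongr
    _ = K ^ 3 * #(B + T) * #B := by ring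

lemma card_dilateSum_succ_le (hr : Function.Injective (r • · : G → G)) (hB : B.Nonempty)
    (hK : #(B + r • B) ≤ K * #B) (l : ℕ) :
    #(dilateSum r B (l + 1)) ≤ K ^ 4 * #(dilateSum r B l) := by
  have hBpos : (0 : ℝ) < #B := by exact_mod_cast hB.card_pos
  have hK0 : 0 ≤ K := zero_le_one.trans (one_le_of_card_add_smul_le hB hK)
  have hRuzsa : (#(dilateSum r B (l + 1)) * #B : ℝ) ≤ #(B + r • B) * #(B + dilateSum r B l) := by
    rw [dilateSum_succ]
    exact_mod_cast card_add_smul_mul_card_le hr B B (dilateSum r B l)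
  obtain ⟨T, hT⟩ := exists_dilateSum_eq_add r B l
  have hstep : (#(B + dilateSum r B l) : ℝ) ≤ K ^ 3 * #(dilateSum r B l) := by
    rw [hT]
    exact card_add_add_le hr hB hK T
  refine le_of_mul_le_mul_right ?_ hBpos
  calc (#(dilateSum r B (l + 1)) * #B : ℝ) ≤ #(B + r • B) * #(B + dilateSum r B l) := hRuzsa
    _ ≤ K * #B * (K ^ 3 * #(dilateSum r B l)) := by gcongr
    _ = K ^ 4 * #(dilateSum r B l) * #B := by ring

lemma card_dilateSum_le (hr : Function.Injective (r • · : G → G)) (hB : B.Nonempty)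
    (hK : #(B + r • B) ≤ K * #B) {l : ℕ} (hl : 1 ≤ l) :
    #(dilateSum r B l) ≤ K ^ (4 * l - 3) * #B := by
  induction l, hl using Nat.le_induction with
  | base => simpa [dilateSum_succ] using hK
  | succ l _ ih =>
    calc (#(dilateSum r B (l + 1)) : ℝ) ≤ K ^ 4 * #(dilateSum r B l) :=
          card_dilateSum_succ_le hr hB hK l
      _ ≤ K ^ 4 * (K ^ (4 * l - 3) * #B) := by gcongr
      _ = K ^ (4 * (l + 1) - 3) * #B := by
          rw [← mul_assoc, ← pow_add, show 4 + (4 * l - 3) = 4 * (l + 1) - 3 by omega]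

end Finset

theorem card_iterated_dilate_sum_le_general {G : Type*} [AddCommGroup G] [DecidableEq G]
    (lam : ℤ) (hlam : Function.Injective fun x : G => lam • x)
    (B : Finset G) (hB : B.Nonempty) (K : ℝ)
    (h : ((B + B.image fun b => lam • b).card : ℝ) ≤ K * B.card) :
    ∀ l : ℕ, 1 ≤ l →
      (((∑ i ∈ Finset.range (l + 1), B.image fun b => lam ^ i • b).card : ℝ)) ≤
        K ^ (7 * l - 6) * B.card := by
  intro l hl
  have hK1 : 1 ≤ K := one_le_of_card_add_smul_le hB h
  calc (#(dilateSum lam B l) : ℝ) ≤ K ^ (4 * l - 3) * #B := card_dilateSum_le hlam hB h hl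
    _ ≤ K ^ (7 * l - 6) * #B := by gcongr K ^ ?_ * _; omega

/-- Let `G` be an abelian group, `λ` an integer such that `x ↦ λx` is injective on `G`,
`B` a finite nonempty subset of `G`, and `K > 0` with `|B + λ·B| ≤ K|B|` (where
`λ·B = {λb : b ∈ B}` and `+` is the Minkowski sum). Then for every positive integer `l`,
`|B + λ·B + λ²·B + ⋯ + λ^l·B| ≤ K^{7l−6}|B|`. -/
theorem card_iterated_dilate_sum_le {G : Type*} [AddCommGroup G] [DecidableEq G]
    (lam : ℤ) (hlam : Function.Injective fun x : G => lam • x)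
    (B : Finset G) (hB : B.Nonempty) (K : ℝ) (hK : 0 < K)
    (h : ((B + B.image fun b => lam • b).card : ℝ) ≤ K * B.card) :
    ∀ l : ℕ, 1 ≤ l →
      (((∑ i ∈ Finset.range (l + 1), B.image fun b => lam ^ i • b).card : ℝ)) ≤
        K ^ (7 * l - 6) * B.card :=
  card_iterated_dilate_sum_le_general lam hlam B hB K h
end

section
/- Let G be an abelian group, λ an integer such that the map x ↦ λx is injective on G, B a finite nonempty subset of G, and K > 0 a real number such that |B + λ·B| ≤ K|B|. Then |B + B| ≤ K²|B|. -/
open Pointwise Finset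

/-- Let `G` be an abelian group, `λ` an integer such that `x ↦ λx` is injective on `G`,
`B` a finite nonempty subset of `G`, and `K > 0` with `|B + λ·B| ≤ K|B|` (where
`λ·B = {λb : b ∈ B}` and `+` is the Minkowski sum). Then `|B + B| ≤ K²|B|`. -/
theorem card_add_self_le {G : Type*} [AddCommGroup G] [DecidableEq G]
    (lam : ℤ) (hlam : Function.Injective fun x : G => lam • x)
    (B : Finset G) (hB : B.Nonempty) (K : ℝ) (hK : 0 < K)
    (h : ((B + B.image fun b => lam • b).card : ℝ) ≤ K * B.card) :
    ((B + B).card : ℝ) ≤ K ^ 2 * B.card := by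
  set L := B.image fun b => lam • b with hL
  have hcard : L.card = B.card := Finset.card_image_of_injective _ hlam
  have key := Finset.ruzsa_triangle_inequality_add_add_add B L B
  rw [add_comm L B, hcard] at key
  have hBpos : (0 : ℝ) < B.card := by
    exact_mod_cast hB.card_pos
  have key' : ((B + B).card : ℝ) * B.card ≤ ((B + L).card : ℝ) ^ 2 := by
    rw [sq]; exact_mod_cast key
  have h2 : ((B + L).card : ℝ) ^ 2 ≤ (K * B.card) ^ 2 := by
    apply pow_le_pow_left₀ (by positivity) h
  have : ((B + B).card : ℝ) * B.card ≤ K ^ 2 * B.card * B.card := by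
    calc ((B + B).card : ℝ) * B.card ≤ (K * B.card) ^ 2 := key'.trans h2
    _ = K ^ 2 * B.card * B.card := by ring
  exact le_of_mul_le_mul_right this hBpos
end

section
/- Let G be an abelian group, λ an integer such that the map x ↦ λx is injective on G, B a finite nonempty subset of G, and K > 0 a real number such that |B + λ·B| ≤ K|B|. Then |B + B + λ·B| ≤ K^7|B|. -/
/-!
Let `L = λ·B`, so `#L = #B` by injectivity of `x ↦ λx`. Plünnecke–Ruzsa applied to
`#(L + B) ≤ K #L` gives `#(B + B + B) ≤ K³ #B`, and Ruzsa's triangle inequality through `B`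
gives `#(B + B + L) #B ≤ #(B + B + B) #(B + L) ≤ K⁴ #B²`. Hence `#(B + B + L) ≤ K⁴ #B ≤ K⁷ #B`,
as `#B ≤ #(B + L)` forces `K ≥ 1`.
-/

open Pointwise Finset

namespace Finset

variable {G : Type*} [AddCommGroup G] [DecidableEq G]

lemma card_nsmul_le_of_card_add_le {A B : Finset G} (hA : A.Nonempty) {K : ℝ}
    (h : (#(A + B) : ℝ) ≤ K * #A) (n : ℕ) : (#(n • B) : ℝ) ≤ K ^ n * #A := by
  have hApos : (0 : ℝ) < #A := by exact_mod_cast hA.card_pos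
  calc (#(n • B) : ℝ) ≤ (#(A + B) / #A : ℝ) ^ n * #A := by
        simpa using NNRat.cast_le (K := ℝ) |>.mpr (pluennecke_ruzsa_inequality_nsmul_add hA B n)
    _ ≤ K ^ n * #A := by
        gcongr
        rwa [div_le_iff₀ hApos]

lemma one_le_of_card_add_le {B C : Finset G} (hB : B.Nonempty) (hC : C.Nonempty) {K : ℝ}
    (h : (#(B + C) : ℝ) ≤ K * #B) : 1 ≤ K := by
  have hBpos : (0 : ℝ) < #B := by exact_mod_cast hB.card_pos
  have hBC : (#B : ℝ) ≤ #(B + C) := by exact_mod_cast card_le_card_add_right hC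
  exact (le_mul_iff_one_le_left hBpos).mp (hBC.trans h)

lemma card_add_add_le_of_card_add_le {B C : Finset G} (hB : B.Nonempty) (hC : #C = #B)
    {K : ℝ} (h : (#(B + C) : ℝ) ≤ K * #B) : (#(B + B + C) : ℝ) ≤ K ^ 4 * #B := by
  have hBpos : (0 : ℝ) < #B := by exact_mod_cast hB.card_pos
  have hK : 0 ≤ K := nonneg_of_mul_nonneg_left ((Nat.cast_nonneg _).trans h) hBpos
  have hBBB : (#(B + B + B) : ℝ) ≤ K ^ 3 * #B := by
    have hCB : (#(C + B) : ℝ) ≤ K * #C := by rwa [add_comm, hC]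
    have := card_nsmul_le_of_card_add_le (card_pos.mp (hC ▸ hB.card_pos)) hCB 3
    rwa [succ_nsmul, two_nsmul, hC] at this
  refine le_of_mul_le_mul_right ?_ hBpos
  calc (#(B + B + C) : ℝ) * #B ≤ #(B + B + B) * #(B + C) := by
        exact_mod_cast ruzsa_triangle_inequality_add_add_add (B + B) B C
    _ ≤ (K ^ 3 * #B) * (K * #B) := by gcongr
    _ = K ^ 4 * #B * #B := by ring

end Finset

theorem card_add_add_dilate_le_general {G : Type*} [AddCommGroup G] [DecidableEq G]
    (lam : ℤ) (hlam : Function.Injective fun x : G => lam • x)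
    (B : Finset G) (hB : B.Nonempty) (K : ℝ)
    (h : ((B + B.image fun b => lam • b).card : ℝ) ≤ K * B.card) :
    ((B + B + B.image fun b => lam • b).card : ℝ) ≤ K ^ 7 * B.card := by
  have hcard : #(B.image fun b => lam • b) = #B := card_image_of_injective _ hlam
  have hK : 1 ≤ K := one_le_of_card_add_le hB (hB.image _) h
  calc _ ≤ K ^ 4 * #B := card_add_add_le_of_card_add_le hB hcard h
    _ ≤ K ^ 7 * #B := by gcongr; norm_num

/-- Let `G` be an abelian group, `λ` an integer such that `x ↦ λx` is injective on `G`,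
`B` a finite nonempty subset of `G`, and `K > 0` with `|B + λ·B| ≤ K|B|` (where
`λ·B = {λb : b ∈ B}` and `+` is the Minkowski sum). Then `|B + B + λ·B| ≤ K^7|B|`. -/
theorem card_add_add_dilate_le {G : Type*} [AddCommGroup G] [DecidableEq G]
    (lam : ℤ) (hlam : Function.Injective fun x : G => lam • x)
    (B : Finset G) (hB : B.Nonempty) (K : ℝ) (hK : 0 < K)
    (h : ((B + B.image fun b => lam • b).card : ℝ) ≤ K * B.card) :
    ((B + B + B.image fun b => lam • b).card : ℝ) ≤ K ^ 7 * B.card :=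
  card_add_add_dilate_le_general lam hlam B hB K h
end

section
/- Let G be an abelian group, λ an integer such that the map x ↦ λx is injective on G, A a finite nonempty subset of G, and K > 0 a real number such that |A + λ·A| ≤ K|A|. Then |(A + A − A − A) + λ·(A + A − A − A)| ≤ K^{20}|A|. -/
open Pointwise Finset

/-- Let `G` be an abelian group, `λ` an integer such that `x ↦ λx` is injective on `G`,
`A` a finite nonempty subset of `G`, and `K > 0` with `|A + λ·A| ≤ K|A|` (where
`λ·A = {λa : a ∈ A}` and `+`, `−` are Minkowski sum/difference). Then
`|(A + A − A − A) + λ·(A + A − A − A)| ≤ K^{20}|A|`. -/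
theorem card_diff_set_dilate_le {G : Type*} [AddCommGroup G] [DecidableEq G]
    (lam : ℤ) (hlam : Function.Injective fun x : G => lam • x)
    (A : Finset G) (hA : A.Nonempty) (K : ℝ) (hK : 0 < K)
    (h : ((A + A.image fun a => lam • a).card : ℝ) ≤ K * A.card) :
    (((A + A - A - A) + (A + A - A - A).image fun a => lam • a).card : ℝ) ≤
      K ^ 20 * A.card := by
  set L : Finset G := A.image fun a => lam • a with hLdef
  set n : ℝ := (A.card : ℝ) with hndef
  have hn : 0 < n := by rw [hndef]; exact_mod_cast card_pos.2 hA
  have hLcard : (#L : ℝ) = n := by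
    rw [hndef, hLdef]; exact_mod_cast Finset.card_image_of_injective A hlam
  -- Plünnecke–Ruzsa, real version, flexible constant
  have P : ∀ (B : Finset G) (C : ℝ) (m k : ℕ), 0 ≤ C → ((#(A + B) : ℝ) ≤ C * n) →
      ((#(m • B - k • B) : ℝ) ≤ C ^ (m + k) * n) := by
    intro B C m k hC hB
    have q := Finset.pluennecke_ruzsa_inequality_nsmul_sub_nsmul_add hA B m k
    have q0 := NNRat.cast_le (K := ℝ) |>.mpr q
    push_cast at q0
    have q' : (#(m • B - k • B) : ℝ) ≤ ((#(A + B) : ℝ) / n) ^ (m + k) * n := by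
      rw [hndef]; exact_mod_cast q0
    refine q'.trans ?_
    have hdiv : (#(A + B) : ℝ) / n ≤ C := (div_le_iff₀ hn).2 hB
    have hdiv0 : 0 ≤ (#(A + B) : ℝ) / n := by positivity
    gcongr
  -- set identities
  have e1 : L - L - -A = A + L - L := by
    simp only [sub_eq_add_neg, sub_neg_eq_add, neg_neg]; ac_rfl
  have e2 : L - L - L = 1 • L - 2 • L := by
    simp only [one_nsmul, two_nsmul, sub_eq_add_neg, neg_add]; ac_rfl
  have e3 : #(-A - L) = #(A + L) := by
    rw [show -A - L = -(A + L) by rw [neg_add, sub_eq_add_neg, add_comm], Finset.card_neg]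
  -- step (i): #(A + L - L) ≤ K^4 n
  have hLL : (#(1 • L - 2 • L) : ℝ) ≤ K ^ 3 * n := P L K 1 2 hK.le h
  have t1 := Finset.ruzsa_triangle_inequality_sub_sub_sub (L - L) L (-A)
  rw [e1, e2, e3] at t1
  have h1 : (#(A + L - L) : ℝ) ≤ K ^ 4 * n := by
    have t1' : (#(A + L - L) : ℝ) * n ≤ (#(1 • L - 2 • L) : ℝ) * (#(A + L) : ℝ) := by
      rw [← hLcard]; exact_mod_cast t1
    have : (#(A + L - L) : ℝ) * n ≤ (K ^ 3 * n) * (K * n) := by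
      refine t1'.trans ?_
      exact mul_le_mul hLL h (by positivity) (by positivity)
    nlinarith [hn]
  -- step (ii): #(A + (A + L)) ≤ K^5 n
  have e4 : A + L - -A = A + (A + L) := by
    simp only [sub_eq_add_neg, neg_neg]; ac_rfl
  have t2 := Finset.ruzsa_triangle_inequality_sub_sub_sub (A + L) L (-A)
  rw [e4, e3] at t2
  have hAS : (#(A + (A + L)) : ℝ) ≤ K ^ 5 * n := by
    have t2' : (#(A + (A + L)) : ℝ) * n ≤ (#(A + L - L) : ℝ) * (#(A + L) : ℝ) := by
      rw [← hLcard]; exact_mod_cast t2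
    have : (#(A + (A + L)) : ℝ) * n ≤ (K ^ 4 * n) * (K * n) := by
      refine t2'.trans ?_
      exact mul_le_mul h1 h (by positivity) (by positivity)
    nlinarith [hn]
  -- final Plünnecke on S = A + L
  have final : (#(2 • (A + L) - 2 • (A + L)) : ℝ) ≤ (K ^ 5) ^ 4 * n :=
    P (A + L) (K ^ 5) 2 2 (by positivity) hAS
  -- rewrite the target set
  have eIm : (A + A - A - A).image (fun a => lam • a) = L + L - L - L := by
    have hf : (fun a : G => lam • a) = ⇑(zsmulAddGroupHom lam) := rfl
    rw [hLdef, hf]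
    simp only [sub_eq_add_neg, Finset.image_add, Finset.image_neg]
  have eT : (A + A - A - A) + (A + A - A - A).image (fun a => lam • a)
      = 2 • (A + L) - 2 • (A + L) := by
    rw [eIm, two_nsmul]
    simp only [sub_eq_add_neg, neg_add]; ac_rfl
  rw [eT]
  calc (#(2 • (A + L) - 2 • (A + L)) : ℝ) ≤ (K ^ 5) ^ 4 * n := final
    _ = K ^ 20 * n := by ring
end

section
/- For every integer d ≥ 2, every α ∈ (0, 2^{−d}) and every ε > 0, there exists λ₀ such that for every integer λ ≥ λ₀ there exists p₀ such that for every prime p ≥ p₀ there exists a subset A ⊆ ℤ/pℤ with |A| ≥ αp and |A + λ·A| ≤ (2^{d−1}·α^{1−1/d} + ε)·p. -/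
/-!
Take `A` to be the Bohr set `{x | λ^j x ∈ t_j + [0, L) for all j < d}` with `L = ⌈α^{1/d} p⌉`:
averaging over the shifts `t` gives one with `|A| ≥ L^d / p^{d-1} ≥ α p`. Since
`λ^j (x + λ y) = λ^j x + λ^{j+1} y`, the sumset `A + λ·A` lies in a Bohr set with `d - 1`
conditions of width `2L`. Counting the latter condition by condition, the `j`-th condition cuts
each interval of candidates of length `ℓ` into at most `λ^j ℓ / p + 2` intervals of length about
`2L / λ^j`, which gives about `(2L/p)^{d-1} p = 2^{d-1} α^{1-1/d} p` elements, up to errors that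
vanish as first `λ` and then `p` tend to infinity.
-/

open Pointwise Finset Filter Topology

theorem card_filter_mod_lt_and_le {p c M e : ℕ} (hc : 0 < c) (P : ℕ → Prop) [DecidablePred P]
    {B : ℕ} (hB : ∀ m, #{v ∈ Ico m (m + (M / c + 1)) | P v} ≤ B) (a len : ℕ) :
    #{v ∈ Ico a (a + len) | (c * v + e) % p < M ∧ P v} ≤ (c * len / p + 2) * B := by
  set S := {v ∈ Ico a (a + len) | (c * v + e) % p < M ∧ P v}
  have hmaps : ∀ v ∈ S, (c * v + e) / p ∈ Icc ((c * a + e) / p) ((c * (a + len) + e) / p) := by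
    intro v hv
    obtain ⟨hav, hva⟩ := mem_Ico.1 (mem_filter.1 hv).1
    exact mem_Icc.2 ⟨Nat.div_le_div_right (by gcongr), Nat.div_le_div_right (by gcongr)⟩
  -- within one fibre of `v ↦ (c * v + e) / p`, the values `c * v` differ by less than `M`
  have hclose : ∀ m ∈ S, ∀ v ∈ S, (c * m + e) / p = (c * v + e) / p → m ≤ v →
      v ∈ {v ∈ Ico m (m + (M / c + 1)) | P v} := by
    intro m hm v hv hq hmv
    simp only [S, mem_filter, mem_Ico] at hm hv ⊢
    have hdiff : (v - m) * c ≤ M := by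
      have h1 := Nat.div_add_mod (c * v + e) p
      have h2 := Nat.div_add_mod (c * m + e) p
      rw [← hq] at h1
      rw [Nat.sub_mul, mul_comm v, mul_comm m]
      omega
    have := (Nat.le_div_iff_mul_le hc).2 hdiff
    exact ⟨⟨hmv, by omega⟩, hv.2.2⟩
  have hfibre : ∀ q ∈ Icc ((c * a + e) / p) ((c * (a + len) + e) / p),
      #{v ∈ S | (c * v + e) / p = q} ≤ B := by
    intro q _
    set F := {v ∈ S | (c * v + e) / p = q}
    rcases F.eq_empty_or_nonempty with hF | hF
    · simp [hF]
    refine (card_le_card fun v hv => ?_).trans (hB (F.min' hF))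
    have hm := mem_filter.1 (F.min'_mem hF)
    have hv' := mem_filter.1 hv
    exact hclose _ hm.1 v hv'.1 (hm.2.trans hv'.2.symm) (F.min'_le v hv)
  have hcount : #(Icc ((c * a + e) / p) ((c * (a + len) + e) / p)) ≤ c * len / p + 2 := by
    have := Nat.add_div_le_div_add_div_add_one (c * a + e) (c * len) p
    rw [Nat.card_Icc, show c * (a + len) + e = c * a + e + c * len by ring]
    generalize (c * a + e) / p = x at this ⊢
    generalize (c * a + e + c * len) / p = y at this ⊢
    generalize c * len / p = z at this ⊢
    omega
  calc #S ≤ B * #(Icc ((c * a + e) / p) ((c * (a + len) + e) / p)) :=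
        card_le_mul_card_image_of_maps_to hmaps B hfibre
    _ ≤ (c * len / p + 2) * B := by rw [mul_comm]; gcongr

-- At depth `i` one has `c = l ^ (i + 1)` and `len ≈ M / l ^ i`, whence the invariant
-- `c * len ≤ l * M + c`.
theorem card_filter_forall_mod_lt_le {p l M : ℕ} (hl : 0 < l) (k : ℕ) :
    ∀ {c : ℕ} (a len : ℕ) (E : Fin k → ℕ), 0 < c → c * len ≤ l * M + c → c * l ^ k ≤ p →
      #{v ∈ Ico a (a + len) | ∀ j : Fin k, (c * l ^ (j : ℕ) * v + E j) % p < M} ≤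
        (l * M / p + 3) ^ k * (l * M / (c * l ^ k) + 1) := by
  induction k with
  | zero =>
    intro c a len E hc hlen _
    simp only [IsEmpty.forall_iff, filter_true, Nat.card_Ico, pow_zero, one_mul, mul_one]
    rw [← Nat.add_div_right _ hc]
    exact (Nat.le_div_iff_mul_le hc).2 (by lia)
  | succ k ih =>
    intro c a len E hc hlen hp
    simp only [Fin.forall_fin_succ, Fin.val_zero, pow_zero, mul_one, Fin.val_succ, pow_succ',
      ← mul_assoc]
    have hcp : c ≤ p := le_trans (Nat.le_mul_of_pos_right c (by positivity)) hp
    have hfactor : c * len / p + 2 ≤ l * M / p + 3 := by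
      have : c * len / p ≤ l * M / p + 1 := by
        rw [← Nat.add_div_right _ (hc.trans_le hcp)]
        exact Nat.div_le_div_right (by lia)
      lia
    have hlen' : ∀ m, #{v ∈ Ico m (m + (M / c + 1)) |
        ∀ j : Fin k, (c * l * l ^ (j : ℕ) * v + E j.succ) % p < M} ≤
          (l * M / p + 3) ^ k * (l * M / (c * l * l ^ k) + 1) := by
      intro m
      refine ih m _ (fun j => E j.succ) (Nat.mul_pos hc hl) ?_
        (by rwa [pow_succ', ← mul_assoc] at hp)
      have := Nat.mul_div_le M c
      nlinarith
    calc _ ≤ (c * len / p + 2) * ((l * M / p + 3) ^ k * (l * M / (c * l * l ^ k) + 1)) :=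
          card_filter_mod_lt_and_le hc _ hlen' a len
      _ ≤ _ := by
        rw [mul_assoc (l * M / p + 3)]
        exact Nat.mul_le_mul_right _ hfactor

-- `x ∈ bohrBox c L t` iff `c ^ j * x ∈ t j + {0, …, L - 1}` for every `j`.
def bohrBox {p n : ℕ} [NeZero p] (c : ZMod p) (L : ℕ) (t : Fin n → ZMod p) : Finset (ZMod p) :=
  {x | ∀ j : Fin n, (c ^ (j : ℕ) * x - t j).val < L}

section BohrBox

variable {p : ℕ} [NeZero p]

theorem card_bohrBox_le {l M k : ℕ} (hl : 0 < l) (hp : l ^ (k + 1) ≤ p)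
    (s : Fin (k + 1) → ZMod p) :
    #(bohrBox (l : ZMod p) M s) ≤ (l * M / p + 3) ^ k * (l * M / (l * l ^ k) + 1) := by
  set E : Fin k → ℕ := fun j => ((l : ZMod p) ^ ((j : ℕ) + 1) * s 0 - s j.succ).val
  have hval (z : ZMod p) (j : Fin k) : ((l : ZMod p) ^ ((j : ℕ) + 1) * z - s j.succ).val =
      (l * l ^ (j : ℕ) * (z - s 0).val + E j) % p := by
    rw [← ZMod.val_natCast]
    push_cast [E, ZMod.natCast_zmod_val]
    ring_nf
  calc #(bohrBox (l : ZMod p) M s)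
      ≤ #{u ∈ Ico 0 (0 + M) | ∀ j : Fin k, (l * l ^ (j : ℕ) * u + E j) % p < M} := by
        refine card_le_card_of_injOn (fun z => (z - s 0).val) (fun z hz => ?_) ?_
        · simp only [bohrBox, mem_coe, mem_filter, mem_univ, true_and, Fin.forall_fin_succ,
            Fin.val_zero, pow_zero, one_mul, Fin.val_succ] at hz
          simpa only [mem_coe, mem_filter, mem_Ico, zero_le, true_and, zero_add, ← hval] using hz
        · intro z _ w _ h
          simpa using ZMod.val_injective p h
    _ ≤ _ := card_filter_forall_mod_lt_le hl k 0 M E hl (by lia) (by rwa [pow_succ'] at hp)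

theorem card_filter_sub_val_lt {L : ℕ} (hL : L ≤ p) (c : ZMod p) :
    #{y : ZMod p | (c - y).val < L} = L := by
  rw [← card_range L]
  refine card_nbij' (fun y => (c - y).val) (fun n => c - n) (fun y hy => by simpa using hy)
    (fun n hn => ?_) (fun y _ => by simp) (fun n hn => ?_)
  all_goals
    have hn : n < L := by simpa using hn
    simp [ZMod.val_natCast, Nat.mod_eq_of_lt (hn.trans_le hL), hn]

theorem sum_card_bohrBox {n L : ℕ} (hL : L ≤ p) (c : ZMod p) :
    ∑ t : Fin n → ZMod p, #(bohrBox c L t) = p * L ^ n := by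
  calc ∑ t : Fin n → ZMod p, #(bohrBox c L t)
      = ∑ x : ZMod p, #{t : Fin n → ZMod p | ∀ j : Fin n, (c ^ (j : ℕ) * x - t j).val < L} :=
        sum_card_bipartiteAbove_eq_sum_card_bipartiteBelow _
    _ = ∑ x : ZMod p, L ^ n := by
        refine sum_congr rfl fun x _ => ?_
        have : ({t | ∀ j : Fin n, (c ^ (j : ℕ) * x - t j).val < L} : Finset (Fin n → ZMod p)) =
            Fintype.piFinset fun j : Fin n => {y | (c ^ (j : ℕ) * x - y).val < L} := by
          ext t
          simp only [mem_filter, mem_univ, true_and, Fintype.mem_piFinset]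
        simp [this, Fintype.card_piFinset, card_filter_sub_val_lt hL]
    _ = p * L ^ n := by simp [ZMod.card]

theorem exists_le_card_bohrBox {n L : ℕ} (hL : L ≤ p) (c : ZMod p) :
    ∃ t : Fin n → ZMod p, p * L ^ n ≤ p ^ n * #(bohrBox c L t) := by
  obtain ⟨t, -, ht⟩ := exists_le_of_sum_le univ_nonempty
    (f := fun _ : Fin n → ZMod p => p * L ^ n) (g := fun t => p ^ n * #(bohrBox c L t)) (by
      simp [← mul_sum, sum_card_bohrBox (n := n) hL, ZMod.card])
  exact ⟨t, ht⟩

theorem add_image_mul_bohrBox_subset {n L : ℕ} (c : ZMod p) (t : Fin (n + 1) → ZMod p) :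
    bohrBox c L t + (bohrBox c L t).image (c * ·) ⊆
      bohrBox c (2 * L) (fun j : Fin n => t j.castSucc + t j.succ) := by
  intro z hz
  obtain ⟨x, hx, _, hy, rfl⟩ := mem_add.1 hz
  obtain ⟨a, ha, rfl⟩ := mem_image.1 hy
  simp only [bohrBox, mem_filter, mem_univ, true_and] at hx ha ⊢
  intro j
  have hx := hx j.castSucc
  have ha := ha j.succ
  simp only [Fin.val_castSucc, Fin.val_succ] at hx ha
  have := ZMod.val_add_le (c ^ (j : ℕ) * x - t j.castSucc) (c ^ ((j : ℕ) + 1) * a - t j.succ)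
  calc _ = (c ^ (j : ℕ) * x - t j.castSucc + (c ^ ((j : ℕ) + 1) * a - t j.succ)).val := by ring_nf
    _ < 2 * L := by lia

theorem exists_pow_mul_le_card_bohrBox (n : ℕ) {b : ℝ} (hb : 0 ≤ b) (hb1 : b ≤ 1) (c : ZMod p) :
    ∃ t : Fin n → ZMod p, b ^ n * p ≤ #(bohrBox c ⌈b * p⌉₊ t) := by
  have hp : (0 : ℝ) < p := by exact_mod_cast Nat.pos_of_neZero p
  obtain ⟨t, ht⟩ :=
    exists_le_card_bohrBox (n := n) (Nat.ceil_le.2 (mul_le_of_le_one_left hp.le hb1)) c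
  refine ⟨t, le_of_mul_le_mul_left ?_ (pow_pos hp n)⟩
  calc (p : ℝ) ^ n * (b ^ n * p) = p * (b * p) ^ n := by ring
    _ ≤ p * (⌈b * p⌉₊ : ℝ) ^ n := by gcongr; exact Nat.le_ceil _
    _ ≤ p ^ n * #(bohrBox c ⌈b * p⌉₊ t) := by exact_mod_cast ht

theorem card_add_image_mul_bohrBox_le {l L k : ℕ} (hl : 0 < l) (hp : l ^ (k + 1) ≤ p)
    (t : Fin (k + 2) → ZMod p) :
    (#(bohrBox (l : ZMod p) L t + (bohrBox (l : ZMod p) L t).image ((l : ZMod p) * ·)) : ℝ) ≤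
      ((2 * L : ℕ) / p + 3 / l) ^ k * (((2 * L : ℕ) + l ^ k) / p) * p := by
  set M := 2 * L
  have hl' : (0 : ℝ) < l := by exact_mod_cast hl
  have h1 : ((l * M / p : ℕ) : ℝ) + 3 ≤ l * (M / p + 3 / l) := by
    have := Nat.cast_div_le (α := ℝ) (m := l * M) (n := p)
    rw [mul_add, mul_div_cancel₀ _ hl'.ne', mul_div_assoc']
    push_cast at this
    linarith
  have h2 : ((l * M / (l * l ^ k) : ℕ) : ℝ) + 1 ≤ (M + l ^ k) / l ^ k := by
    have := Nat.cast_div_le (α := ℝ) (m := l * M) (n := l * l ^ k)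
    rw [add_div, div_self (by positivity)]
    push_cast at this
    rw [mul_div_mul_left _ _ hl'.ne'] at this
    linarith
  calc _ ≤ (#(bohrBox (l : ZMod p) M fun j : Fin (k + 1) => t j.castSucc + t j.succ) : ℝ) := by
        exact_mod_cast card_le_card (add_image_mul_bohrBox_subset _ t)
    _ ≤ (((l * M / p : ℕ) : ℝ) + 3) ^ k * (((l * M / (l * l ^ k) : ℕ) : ℝ) + 1) := by
        exact_mod_cast card_bohrBox_le hl hp _
    _ ≤ (l * (M / p + 3 / l)) ^ k * ((M + l ^ k) / l ^ k) := by gcongr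
    _ = (M / p + 3 / l) ^ k * ((M + l ^ k) / p) * p := by
        rw [mul_pow, mul_assoc _ _ (p : ℝ), div_mul_cancel₀ _ (Nat.cast_ne_zero.2 (NeZero.ne p))]
        field_simp

end BohrBox

theorem tendsto_sumset_bound {b : ℝ} (hb : 0 ≤ b) (k : ℕ) (l : ℝ) :
    Tendsto (fun p : ℕ => (((2 * ⌈b * p⌉₊ : ℕ) : ℝ) / p + 3 / l) ^ k *
      ((((2 * ⌈b * p⌉₊ : ℕ) : ℝ) + l ^ k) / p)) atTop (𝓝 ((2 * b + 3 / l) ^ k * (2 * b))) := by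
  have hM : Tendsto (fun p : ℕ => ((2 * ⌈b * p⌉₊ : ℕ) : ℝ) / p) atTop (𝓝 (2 * b)) := by
    simpa [mul_div_assoc] using
      ((tendsto_nat_ceil_mul_div_atTop hb).comp tendsto_natCast_atTop_atTop).const_mul 2
  simpa [add_div] using
    ((hM.add_const _).pow k).mul (hM.add (tendsto_const_div_atTop_nhds_zero_nat _))

theorem pow_rpow_one_sub_one_div {b : ℝ} (hb : 0 ≤ b) {n : ℕ} (hn : n ≠ 0) :
    (b ^ n) ^ (1 - 1 / (n : ℝ)) = b ^ (n - 1) := by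
  have he : (n : ℝ) * (1 - 1 / (n : ℝ)) = (n - 1 : ℕ) := by
    rw [Nat.cast_sub (Nat.one_le_iff_ne_zero.2 hn), Nat.cast_one]
    field_simp
  rw [← Real.rpow_natCast_mul hb, he, Real.rpow_natCast]

/-- For every integer `d ≥ 2`, every `α ∈ (0, 2^{−d})` and every `ε > 0`, there exists `lam₀`
such that for every integer `λ ≥ lam₀` there exists `p₀` such that for every prime `p ≥ p₀`
there exists `A ⊆ ℤ/pℤ` with `|A| ≥ αp` and `|A + λ·A| ≤ (2^{d−1}·α^{1−1/d} + ε)·p`. -/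
theorem sum_dilate_upper_construction :
    ∀ d : ℕ, 2 ≤ d → ∀ α : ℝ, 0 < α → α < 1 / 2 ^ d → ∀ ε : ℝ, 0 < ε →
      ∃ lam₀ : ℤ, ∀ lam : ℤ, lam₀ ≤ lam →
        ∃ p₀ : ℕ, ∀ p : ℕ, p₀ ≤ p → p.Prime →
          ∃ A : Finset (ZMod p), α * p ≤ (A.card : ℝ) ∧
            (((A + A.image fun a => (lam : ZMod p) * a).card : ℝ)) ≤
              (2 ^ (d - 1) * α ^ (1 - 1 / (d : ℝ)) + ε) * p := by
  intro d hd α hα hαd ε hε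
  obtain ⟨k, rfl⟩ : ∃ k, d = k + 2 := ⟨d - 2, by omega⟩
  obtain ⟨b, hb, rfl⟩ : ∃ b : ℝ, 0 < b ∧ b ^ (k + 2) = α :=
    ⟨α ^ ((k + 2 : ℕ) : ℝ)⁻¹, by positivity, Real.rpow_inv_natCast_pow hα.le (by omega)⟩
  have hb1 : b ≤ 1 := (pow_le_one_iff_of_nonneg hb.le (by omega)).1
    (hαd.le.trans (div_le_one_of_le₀ (one_le_pow₀ one_le_two) (by positivity)))
  rw [pow_rpow_one_sub_one_div hb.le (by omega), ← mul_pow, show k + 2 - 1 = k + 1 by omega]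
  have hlam : Tendsto (fun lam : ℤ => (2 * b + 3 / lam) ^ k * (2 * b)) atTop
      (𝓝 ((2 * b) ^ (k + 1))) := by
    simpa [pow_succ] using ((tendsto_const_nhds.add
      (tendsto_const_nhds.div_atTop tendsto_intCast_atTop_atTop)).pow k).mul_const (2 * b)
  obtain ⟨lam₀, hlam₀⟩ := eventually_atTop.1
    ((hlam.eventually (gt_mem_nhds (lt_add_of_pos_right _ hε))).and (eventually_gt_atTop 0))
  refine ⟨lam₀, fun lam hlam => ?_⟩
  obtain ⟨hlim, hl⟩ := hlam₀ lam hlam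
  lift lam to ℕ using hl.le with l
  push_cast at hlim ⊢
  obtain ⟨p₀, hp₀⟩ := eventually_atTop.1 (((tendsto_sumset_bound hb.le k l).eventually
    (gt_mem_nhds hlim)).and (eventually_ge_atTop (l ^ (k + 1))))
  refine ⟨p₀, fun p hp hpp => ?_⟩
  obtain ⟨hratio, hlp⟩ := hp₀ p hp
  have : NeZero p := ⟨hpp.ne_zero⟩
  obtain ⟨t, ht⟩ := exists_pow_mul_le_card_bohrBox (k + 2) hb.le hb1 (l : ZMod p)
  refine ⟨_, ht, (card_add_image_mul_bohrBox_le (by exact_mod_cast hl) hlp t).trans ?_⟩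
  gcongr
end

section
/- Let γ > 0 be a real number with (γ/4)^{1/3} + (2γ)^{1/3} ≤ 1 and (2γ)^{1/3} < 1. Let B ⊆ 𝕋³ be the product I₁ × I₂ × I₃, where I₁ and I₃ are the images in 𝕋 of the open interval (0, (2γ)^{1/3}) and I₂ is the image in 𝕋 of the open interval (0, (γ/4)^{1/3}). Then μ(B) = γ and μ(π₁(B) + π₃(B)) = (9/2^{4/3})·γ^{2/3}. -/
open Filter MeasureTheory Pointwise

lemma Ioo_zero_add_Ioo_zero {a b : ℝ} (ha : 0 < a) (hb : 0 < b) :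
    Set.Ioo 0 a + Set.Ioo 0 b = Set.Ioo 0 (a + b) := by
  ext x
  constructor
  · rintro ⟨u, hu, v, hv, rfl⟩
    simp only [Set.mem_Ioo] at hu hv ⊢
    constructor <;> [linarith [hu.1, hv.1]; linarith [hu.2, hv.2]]
  · rintro ⟨h0, hab⟩
    have hlt : max (x - b) 0 < min a x := by
      rcases max_cases (x - b) 0 with ⟨h, _⟩ | ⟨h, _⟩ <;> rcases min_cases a x with ⟨h', _⟩ | ⟨h', _⟩ <;>
        simp only [h, h'] <;> linarith
    obtain ⟨u, hu1, hu2⟩ := exists_between hlt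
    obtain ⟨hu1a, hu1b⟩ := max_lt_iff.mp hu1
    obtain ⟨hu2a, hu2b⟩ := lt_min_iff.mp hu2
    exact ⟨u, ⟨hu1b, hu2a⟩, x - u, ⟨by linarith, by linarith⟩, by ring⟩

lemma coe_image_add (s t : Set ℝ) :
    (((↑) : ℝ → 𝕋) '' s) + (((↑) : ℝ → 𝕋) '' t) = ((↑) : ℝ → 𝕋) '' (s + t) := by
  ext x
  simp only [Set.mem_add, Set.mem_image]
  constructor
  · rintro ⟨_, ⟨u, hu, rfl⟩, _, ⟨v, hv, rfl⟩, rfl⟩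
    exact ⟨u + v, ⟨u, hu, v, hv, rfl⟩, by simp⟩
  · rintro ⟨_, ⟨u, hu, v, hv, rfl⟩, rfl⟩
    exact ⟨u, ⟨u, hu, rfl⟩, v, ⟨v, hv, rfl⟩, by simp⟩

lemma vol_coe_Ioo {a : ℝ} (h0 : 0 < a) (h1 : a ≤ 1) :
    volume (((↑) : ℝ → 𝕋) '' Set.Ioo 0 a) = ENNReal.ofReal a := by
  have hopen : IsOpen (((↑) : ℝ → 𝕋) '' Set.Ioo 0 a) :=
    QuotientAddGroup.isOpenMap_coe _ isOpen_Ioo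
  have hmp := AddCircle.measurePreserving_mk (1 : ℝ) 0
  have hpre : ((↑) : ℝ → 𝕋) ⁻¹' (((↑) : ℝ → 𝕋) '' Set.Ioo 0 a) ∩ Set.Ioc 0 (0 + 1)
      = Set.Ioo 0 a := by
    ext x
    simp only [Set.mem_inter_iff, Set.mem_preimage, Set.mem_image, Set.mem_Ioc, Set.mem_Ioo,
      zero_add]
    constructor
    · rintro ⟨⟨y, hy, hxy⟩, hx1, hx2⟩
      have hsub : x - y ∈ AddSubgroup.zmultiples (1 : ℝ) :=
        (QuotientAddGroup.eq_iff_sub_mem).mp hxy.symm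
      obtain ⟨n, hn⟩ := AddSubgroup.mem_zmultiples_iff.mp hsub
      rw [zsmul_eq_mul, mul_one] at hn
      have hn0 : n = 0 := by
        have h1' : (n : ℝ) < 1 := by rw [hn]; linarith [hy.1]
        have h2' : (-1 : ℝ) < n := by rw [hn]; linarith [hy.2, hx1]
        have hA : n < 1 := by exact_mod_cast h1'
        have hB : (-1 : ℤ) < n := by exact_mod_cast h2'
        omega
      rw [hn0] at hn
      norm_num at hn
      have : x = y := by linarith
      rw [this]; exact hy
    · intro hx
      exact ⟨⟨x, hx, rfl⟩, hx.1, by linarith [hx.2]⟩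
  calc volume (((↑) : ℝ → 𝕋) '' Set.Ioo 0 a)
      = (volume.restrict (Set.Ioc 0 (0 + 1)))
          (((↑) : ℝ → 𝕋) ⁻¹' (((↑) : ℝ → 𝕋) '' Set.Ioo 0 a)) :=
        (hmp.measure_preimage hopen.measurableSet.nullMeasurableSet).symm
    _ = volume (((↑) : ℝ → 𝕋) ⁻¹' (((↑) : ℝ → 𝕋) '' Set.Ioo 0 a) ∩ Set.Ioc 0 (0 + 1)) :=
        Measure.restrict_apply (AddCircle.measurable_mk' hopen.measurableSet)
    _ = volume (Set.Ioo 0 a) := by rw [hpre]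
    _ = ENNReal.ofReal a := by simp [Real.volume_Ioo]

lemma box2_eq_pi (S₀ S₁ : Set 𝕋) :
    {y : Fin 2 → 𝕋 | y 0 ∈ S₀ ∧ y 1 ∈ S₁} = Set.pi Set.univ ![S₀, S₁] := by
  ext y
  simp only [Set.mem_pi, Set.mem_univ, forall_true_left, Set.mem_setOf_eq]
  constructor
  · rintro ⟨h0, h1⟩ i; fin_cases i <;> simpa
  · intro h; exact ⟨by simpa using h 0, by simpa using h 1⟩

lemma vol_box2 (S₀ S₁ : Set 𝕋) :
    volume {y : Fin 2 → 𝕋 | y 0 ∈ S₀ ∧ y 1 ∈ S₁} = volume S₀ * volume S₁ := by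
  rw [box2_eq_pi, volume_pi_pi]
  simp [Fin.prod_univ_two]

lemma box2_add_box2 (A A' C C' : Set 𝕋) :
    ({y : Fin 2 → 𝕋 | y 0 ∈ A ∧ y 1 ∈ C} + {y : Fin 2 → 𝕋 | y 0 ∈ A' ∧ y 1 ∈ C'})
      = {y : Fin 2 → 𝕋 | y 0 ∈ A + A' ∧ y 1 ∈ C + C'} := by
  ext y
  simp only [Set.mem_add, Set.mem_setOf_eq]
  constructor
  · rintro ⟨u, hu, v, hv, rfl⟩
    exact ⟨⟨u 0, hu.1, v 0, hv.1, rfl⟩, ⟨u 1, hu.2, v 1, hv.2, rfl⟩⟩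
  · rintro ⟨⟨p, hp, q, hq, hpq⟩, ⟨r, hr, s', hs', hrs⟩⟩
    refine ⟨![p, r], ⟨by simpa using hp, by simpa using hr⟩,
      ![q, s'], ⟨by simpa using hq, by simpa using hs'⟩, ?_⟩
    funext i
    fin_cases i <;> simp [hpq, hrs]

/-- Let `γ > 0` with `(γ/4)^{1/3} + (2γ)^{1/3} ≤ 1` and `(2γ)^{1/3} < 1`. Let `B ⊆ 𝕋³` be the
product `I₁ × I₂ × I₃`, where `I₁ = I₃` is the image in `𝕋` of `(0, (2γ)^{1/3})` and `I₂` is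
the image in `𝕋` of `(0, (γ/4)^{1/3})`. Then `μ(B) = γ` and
`μ(π₁(B) + π₃(B)) = (9/2^{4/3})·γ^{2/3}`. -/
theorem measure_box_dim_three (γ : ℝ) (hγ : 0 < γ)
    (hsum : (γ / 4) ^ ((1 : ℝ) / 3) + (2 * γ) ^ ((1 : ℝ) / 3) ≤ 1)
    (hlt : (2 * γ) ^ ((1 : ℝ) / 3) < 1)
    (I₁ I₂ I₃ : Set 𝕋)
    (hI₁ : I₁ = ((↑) : ℝ → 𝕋) '' Set.Ioo 0 ((2 * γ) ^ ((1 : ℝ) / 3)))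
    (hI₂ : I₂ = ((↑) : ℝ → 𝕋) '' Set.Ioo 0 ((γ / 4) ^ ((1 : ℝ) / 3)))
    (hI₃ : I₃ = ((↑) : ℝ → 𝕋) '' Set.Ioo 0 ((2 * γ) ^ ((1 : ℝ) / 3)))
    (B : Set (Fin 3 → 𝕋)) (hB : B = {x | x 0 ∈ I₁ ∧ x 1 ∈ I₂ ∧ x 2 ∈ I₃}) :
    (volume B).toReal = γ ∧
    (volume (projFirst 2 '' B + projLast 2 '' B)).toReal =
      9 / 2 ^ ((4 : ℝ) / 3) * γ ^ ((2 : ℝ) / 3) := by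
  have h2γ : (0:ℝ) < 2 * γ := by linarith
  have hγ4 : (0:ℝ) < γ / 4 := by linarith
  set a := (2 * γ) ^ ((1:ℝ)/3) with ha_def
  set b := (γ / 4) ^ ((1:ℝ)/3) with hb_def
  have ha0 : 0 < a := Real.rpow_pos_of_pos h2γ _
  have hb0 : 0 < b := Real.rpow_pos_of_pos hγ4 _
  have ha1 : a ≤ 1 := le_of_lt hlt
  have hb1 : b ≤ 1 := by linarith
  -- volumes of arcs
  have hvI₁ : volume I₁ = ENNReal.ofReal a := by rw [hI₁]; exact vol_coe_Ioo ha0 ha1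
  have hvI₂ : volume I₂ = ENNReal.ofReal b := by rw [hI₂]; exact vol_coe_Ioo hb0 hb1
  have hvI₃ : volume I₃ = ENNReal.ofReal a := by rw [hI₃]; exact vol_coe_Ioo ha0 ha1
  -- interval sums
  have hI₂I₁ : I₂ + I₁ = ((↑) : ℝ → 𝕋) '' Set.Ioo 0 (b + a) := by
    rw [hI₂, hI₁, coe_image_add, Ioo_zero_add_Ioo_zero hb0 ha0]
  have hI₃I₂ : I₃ + I₂ = ((↑) : ℝ → 𝕋) '' Set.Ioo 0 (a + b) := by
    rw [hI₃, hI₂, coe_image_add, Ioo_zero_add_Ioo_zero ha0 hb0]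
  have hvS1 : volume (I₂ + I₁) = ENNReal.ofReal (b + a) := by
    rw [hI₂I₁]; exact vol_coe_Ioo (by linarith) (by linarith)
  have hvS2 : volume (I₃ + I₂) = ENNReal.ofReal (a + b) := by
    rw [hI₃I₂]; exact vol_coe_Ioo (by linarith) (by linarith)
  -- B as a product
  have hBpi : B = Set.pi Set.univ ![I₁, I₂, I₃] := by
    rw [hB]; ext x
    simp only [Set.mem_pi, Set.mem_univ, forall_true_left, Set.mem_setOf_eq]
    constructor
    · rintro ⟨h0, h1, h2⟩ i; fin_cases i <;> simpa
    · intro h; exact ⟨by simpa using h 0, by simpa using h 1, by simpa using h 2⟩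
  have hvolB : volume B = ENNReal.ofReal (a * b * a) := by
    rw [hBpi, volume_pi_pi]
    simp only [Fin.prod_univ_three, Matrix.cons_val_zero, Matrix.cons_val_one, Matrix.head_cons,
      Matrix.cons_val_two, Matrix.tail_cons]
    rw [hvI₁, hvI₂, hvI₃, ← ENNReal.ofReal_mul ha0.le, ← ENNReal.ofReal_mul (by positivity)]
  -- images of B
  obtain ⟨c₁, hc₁⟩ : I₁.Nonempty := by
    rw [hI₁]; exact (Set.nonempty_Ioo.mpr ha0).image _
  obtain ⟨c₃, hc₃⟩ : I₃.Nonempty := by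
    rw [hI₃]; exact (Set.nonempty_Ioo.mpr ha0).image _
  have hproj1 : projFirst 2 '' B = {y : Fin 2 → 𝕋 | y 0 ∈ I₂ ∧ y 1 ∈ I₃} := by
    ext y
    constructor
    · rintro ⟨x, hx, rfl⟩
      rw [hB] at hx
      exact ⟨hx.2.1, hx.2.2⟩
    · rintro ⟨hy0, hy1⟩
      refine ⟨![c₁, y 0, y 1], ?_, ?_⟩
      · rw [hB]; exact ⟨by simpa using hc₁, by simpa using hy0, by simpa using hy1⟩
      · funext i; fin_cases i <;> rfl
  have hproj2 : projLast 2 '' B = {y : Fin 2 → 𝕋 | y 0 ∈ I₁ ∧ y 1 ∈ I₂} := by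
    ext y
    constructor
    · rintro ⟨x, hx, rfl⟩
      rw [hB] at hx
      exact ⟨hx.1, hx.2.1⟩
    · rintro ⟨hy0, hy1⟩
      refine ⟨![y 0, y 1, c₃], ?_, ?_⟩
      · rw [hB]; exact ⟨by simpa using hy0, by simpa using hy1, by simpa using hc₃⟩
      · funext i; fin_cases i <;> rfl
  have hsumvol : volume (projFirst 2 '' B + projLast 2 '' B)
      = ENNReal.ofReal ((b + a) * (a + b)) := by
    rw [hproj1, hproj2, box2_add_box2, vol_box2, hvS1, hvS2,
      ← ENNReal.ofReal_mul (by linarith)]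
  -- real arithmetic
  have hg : γ ^ ((2:ℝ)/3) * γ ^ ((1:ℝ)/3) = γ := by
    rw [← Real.rpow_add hγ]; norm_num
  have hgg : γ ^ ((1:ℝ)/3) * γ ^ ((1:ℝ)/3) = γ ^ ((2:ℝ)/3) := by
    rw [← Real.rpow_add hγ]; norm_num
  have h4 : (4:ℝ) = 2 ^ ((2:ℝ)) := by
    rw [show ((2:ℝ):ℝ) = ((2:ℕ):ℝ) by norm_num, Real.rpow_natCast]; norm_num
  have hb_eq : b = γ ^ ((1:ℝ)/3) / 2 ^ ((2:ℝ)/3) := by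
    rw [hb_def, Real.div_rpow hγ.le (by norm_num), h4, ← Real.rpow_mul (by norm_num)]
    norm_num
  have ha_eq : a = 2 ^ ((1:ℝ)/3) * γ ^ ((1:ℝ)/3) := by
    rw [ha_def, Real.mul_rpow (by norm_num) hγ.le]
  have h2s : (2:ℝ) ^ ((2:ℝ)/3) * 2 ^ ((1:ℝ)/3) = 2 := by
    rw [← Real.rpow_add (by norm_num)]; norm_num
  have h2t : (2:ℝ) ^ ((1:ℝ)/3) * 2 ^ ((1:ℝ)/3) = 2 ^ ((2:ℝ)/3) := by
    rw [← Real.rpow_add (by norm_num)]; norm_num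
  have h2f : (2:ℝ) ^ ((2:ℝ)/3) * 2 ^ ((2:ℝ)/3) = 2 ^ ((4:ℝ)/3) := by
    rw [← Real.rpow_add (by norm_num)]; norm_num
  have hspos : (0:ℝ) < 2 ^ ((2:ℝ)/3) := Real.rpow_pos_of_pos (by norm_num) _
  have hfpos : (0:ℝ) < 2 ^ ((4:ℝ)/3) := Real.rpow_pos_of_pos (by norm_num) _
  constructor
  · rw [hvolB, ENNReal.toReal_ofReal (by positivity)]
    rw [ha_eq, hb_eq]
    field_simp
    linear_combination (γ ^ ((1:ℝ)/3)) ^ 3 * h2t + (2 ^ ((2:ℝ)/3) * γ ^ ((1:ℝ)/3)) * hgg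
      + 2 ^ ((2:ℝ)/3) * hg
  · rw [hsumvol, ENNReal.toReal_ofReal (by positivity)]
    rw [ha_eq, hb_eq]
    field_simp
    linear_combination (2 ^ ((4:ℝ)/3) * (γ ^ ((1:ℝ)/3)) ^ 2 * (2 ^ ((2:ℝ)/3) * 2 ^ ((1:ℝ)/3) + 4)) * h2s
      + 9 * 2 ^ ((4:ℝ)/3) * hgg - 9 * γ ^ ((2:ℝ)/3) * h2f
end
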